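/- arXiv:2210.03064 — 2 statements merged into one kernel-verified Lean document; each statement's English description precedes it below -/
import Mathlib

section
/- Let d > 0. There exist δ₀ = δ₀(d) > 0, a constant C = C(d) ∈ ℕ, and n₀ such that the following holds for all 0 < δ ≤ δ₀ and n ≥ n₀. Let G = (A,B,E) be a (d,δ)-super-regular bipartite graph with |A| = |B| = n. Form a random subgraph H of G as follows: each vertex v of G chooses, uniformly at random and independently of all other vertices, C neighbours of v in G (with repetition allowed), and H consists of all edges chosen by at least one of their endpoints. Then H contains a perfect matching with probability at least 3/4. -/
open Finset

variable {V : Type*} [Fintype V] [DecidableEq V]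

/-- The number of neighbours of `v` in the set `B`. -/
def nbrCount (G : SimpleGraph V) [DecidableRel G.Adj] (v : V) (B : Finset V) : ℕ :=
  (B.filter (fun w => G.Adj v w)).card

/-- The edge density `d_G(A,B) = e_G(A,B)/(|A||B|)` between the vertex sets `A` and `B`. -/
noncomputable def pairDensity (G : SimpleGraph V) [DecidableRel G.Adj] (A B : Finset V) : ℝ :=
  (∑ v ∈ A, (nbrCount G v B : ℝ)) / ((A.card : ℝ) * (B.card : ℝ))

/-- The pair `(A,B)` is `(d,ε)`-regular in `G`: it has density `d`, and all pairs of subsets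
`X ⊆ A`, `Y ⊆ B` with `|X| ≥ ε|A|`, `|Y| ≥ ε|B|` have density within `ε` of `d`. -/
def IsRegularPair (G : SimpleGraph V) [DecidableRel G.Adj] (A B : Finset V) (d ε : ℝ) : Prop :=
  pairDensity G A B = d ∧
    ∀ X ⊆ A, ∀ Y ⊆ B, ε * A.card ≤ X.card → ε * B.card ≤ Y.card →
      |pairDensity G X Y - d| ≤ ε

/-- The pair `(A,B)` is `(d,ε,δ')`-super-regular in `G`: it is `(d,ε)`-regular and every vertex
of one side has at least `δ'` times the size of the other side many neighbours there. -/
def IsSuperRegular3 (G : SimpleGraph V) [DecidableRel G.Adj] (A B : Finset V)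
    (d ε δ' : ℝ) : Prop :=
  IsRegularPair G A B d ε ∧
    (∀ v ∈ A, δ' * B.card ≤ (nbrCount G v B : ℝ)) ∧
    (∀ v ∈ B, δ' * A.card ≤ (nbrCount G v A : ℝ))

/-- `(d,ε)`-super-regular means `(d,ε,d-ε)`-super-regular. -/
def IsSuperRegular (G : SimpleGraph V) [DecidableRel G.Adj] (A B : Finset V) (d ε : ℝ) : Prop :=
  IsSuperRegular3 G A B d ε (d - ε)

/-- The auxiliary random subgraph: given a choice function `c` assigning to each vertex `v` a
`C`-tuple of vertices (its chosen "neighbours"), the graph whose edges are all pairs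
`{v, c v i}`. -/
def chosenGraph {V : Type*} (C : ℕ) (c : V → Fin C → V) : SimpleGraph V :=
  SimpleGraph.fromEdgeSet {e : Sym2 V | ∃ v i, e = s(v, c v i)}

/-- A graph has a perfect matching if some subgraph is a perfect matching. -/
def HasPM {V : Type*} (G' : SimpleGraph V) : Prop :=
  ∃ M : G'.Subgraph, M.IsPerfectMatching

/-! ### Auxiliary definitions -/

section Aux

variable {V : Type} [Fintype V] [DecidableEq V]

/-- All neighbours of a vertex. -/
def Nbrs (G : SimpleGraph V) [DecidableRel G.Adj] (v : V) : Finset V :=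
  univ.filter (G.Adj v)

/-- The set of valid choice functions. -/
def OmegaSet (G : SimpleGraph V) [DecidableRel G.Adj] (C : ℕ) : Finset (V → Fin C → V) :=
  Fintype.piFinset (fun v => Fintype.piFinset (fun _ : Fin C => Nbrs G v))

/-- The allowed choices for a vertex in the bad event indexed by `(S, T)`. -/
def BadNbrs (G : SimpleGraph V) [DecidableRel G.Adj] (B S T : Finset V) (v : V) : Finset V :=
  if v ∈ S then Nbrs G v ∩ T else if v ∈ B \ T then Nbrs G v \ S else Nbrs G v

/-- The bad event indexed by `(S, T)`. -/
def BadSet (G : SimpleGraph V) [DecidableRel G.Adj] (C : ℕ) (B S T : Finset V) :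
    Finset (V → Fin C → V) :=
  Fintype.piFinset (fun v => Fintype.piFinset (fun _ : Fin C => BadNbrs G B S T v))

lemma card_OmegaSet (G : SimpleGraph V) [DecidableRel G.Adj] (C : ℕ) :
    (OmegaSet G C).card = ∏ v, (Nbrs G v).card ^ C := by
  rw [OmegaSet, Fintype.card_piFinset]
  exact Finset.prod_congr rfl fun v _ => by
    rw [Fintype.card_piFinset]; simp

lemma card_BadSet (G : SimpleGraph V) [DecidableRel G.Adj] (C : ℕ) (B S T : Finset V) :
    (BadSet G C B S T).card = ∏ v, (BadNbrs G B S T v).card ^ C := by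
  rw [BadSet, Fintype.card_piFinset]
  exact Finset.prod_congr rfl fun v _ => by
    rw [Fintype.card_piFinset]; simp

lemma BadNbrs_subset (G : SimpleGraph V) [DecidableRel G.Adj] (B S T : Finset V) (v : V) :
    BadNbrs G B S T v ⊆ Nbrs G v := by
  rw [BadNbrs]
  split
  · exact Finset.inter_subset_left
  split
  · exact Finset.sdiff_subset
  · exact subset_rfl

lemma bad_le_general (G : SimpleGraph V) [DecidableRel G.Adj] (C : ℕ) (B S T : Finset V)
    (g : V → ℝ)
    (h : ∀ v, ((BadNbrs G B S T v).card : ℝ) ^ C ≤ g v * ((Nbrs G v).card : ℝ) ^ C) :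
    ((BadSet G C B S T).card : ℝ) ≤ (∏ v, g v) * ((OmegaSet G C).card : ℝ) := by
  rw [card_BadSet, card_OmegaSet]
  push_cast
  rw [← Finset.prod_mul_distrib]
  exact Finset.prod_le_prod (fun v _ => by positivity) (fun v _ => h v)

end Aux

section Bounds

variable {V : Type} [Fintype V] [DecidableEq V] (G : SimpleGraph V) [DecidableRel G.Adj] (C : ℕ) (A B S T : Finset V) (γ : ℝ)

lemma prod_ite_const (S : Finset V) (x : ℝ) :
    (∏ v : V, if v ∈ S then x else 1) = x ^ S.card := by
  rw [Finset.prod_ite_mem univ S (fun _ => x), Finset.univ_inter, Finset.prod_const]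

lemma badA_bound (hγn : 0 < γ * (A.card : ℝ))
    (hdeg_lb : ∀ v, γ * (A.card : ℝ) ≤ ((Nbrs G v).card : ℝ))
    (hT : T.card = S.card) :
    ((BadSet G C B S T).card : ℝ) ≤
      ((S.card : ℝ) / (γ * A.card)) ^ (C * S.card) * ((OmegaSet G C).card : ℝ) := by
  have hbase : (0:ℝ) ≤ (S.card : ℝ) / (γ * A.card) := by positivity
  have key := bad_le_general G C B S T
      (fun v => if v ∈ S then ((S.card : ℝ) / (γ * A.card)) ^ C else 1)
      (fun v => ?_)
  · rwa [prod_ite_const, ← pow_mul] at key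
  · skip
    by_cases hv : v ∈ S
    · rw [if_pos hv]
      have h1 : (BadNbrs G B S T v).card ≤ S.card := by
        rw [BadNbrs, if_pos hv]
        calc (Nbrs G v ∩ T).card ≤ T.card := Finset.card_le_card (Finset.inter_subset_right)
          _ = S.card := hT
      calc ((BadNbrs G B S T v).card : ℝ) ^ C ≤ ((S.card : ℝ)) ^ C := by
            apply pow_le_pow_left₀ (by positivity)
            exact_mod_cast h1
        _ = ((S.card : ℝ) / (γ * A.card)) ^ C * (γ * A.card) ^ C := by
            rw [← mul_pow, div_mul_cancel₀]
            exact ne_of_gt hγn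
        _ ≤ ((S.card : ℝ) / (γ * A.card)) ^ C * ((Nbrs G v).card : ℝ) ^ C := by
            apply mul_le_mul_of_nonneg_left _ (by positivity)
            exact pow_le_pow_left₀ (le_of_lt hγn) (hdeg_lb v) C
    · rw [if_neg hv, one_mul]
      apply pow_le_pow_left₀ (by positivity)
      exact_mod_cast Finset.card_le_card (BadNbrs_subset G B S T v)

lemma badB_bound (hγn : 0 < γ * (A.card : ℝ))
    (hdeg_lb : ∀ v, γ * (A.card : ℝ) ≤ ((Nbrs G v).card : ℝ))
    (hd : Disjoint A B) (hSA : S ⊆ A) (hTB : T ⊆ B) (hT : T.card = S.card)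
    (hBA : B.card = A.card)
    (hNbrB : ∀ v ∈ B, Nbrs G v ⊆ A) :
    ((BadSet G C B S T).card : ℝ) ≤
      (((A.card - S.card : ℕ) : ℝ) / (γ * A.card)) ^ (C * (A.card - S.card)) *
        ((OmegaSet G C).card : ℝ) := by
  have hcardBT : (B \ T).card = A.card - S.card := by
    rw [Finset.card_sdiff_of_subset hTB, hBA, hT]
  have key := bad_le_general G C B S T
      (fun v => if v ∈ B \ T then (((A.card - S.card : ℕ) : ℝ) / (γ * A.card)) ^ C else 1)
      (fun v => ?_)
  · rwa [prod_ite_const, hcardBT, ← pow_mul] at key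
  · skip
    by_cases hv : v ∈ B \ T
    · rw [if_pos hv]
      have hvB : v ∈ B := (Finset.mem_sdiff.mp hv).1
      have hvS : v ∉ S := fun h => Finset.disjoint_left.mp hd (hSA h) hvB
      have h1 : (BadNbrs G B S T v).card ≤ A.card - S.card := by
        rw [BadNbrs, if_neg hvS, if_pos hv]
        calc (Nbrs G v \ S).card ≤ (A \ S).card :=
              Finset.card_le_card (Finset.sdiff_subset_sdiff (hNbrB v hvB) (le_refl _))
          _ = A.card - S.card := Finset.card_sdiff_of_subset hSA
      calc ((BadNbrs G B S T v).card : ℝ) ^ C ≤ (((A.card - S.card : ℕ) : ℝ)) ^ C := by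
            apply pow_le_pow_left₀ (by positivity)
            exact_mod_cast h1
        _ = (((A.card - S.card : ℕ) : ℝ) / (γ * A.card)) ^ C * (γ * A.card) ^ C := by
            rw [← mul_pow, div_mul_cancel₀]
            exact ne_of_gt hγn
        _ ≤ _ := by
            apply mul_le_mul_of_nonneg_left _ (by positivity)
            exact pow_le_pow_left₀ (le_of_lt hγn) (hdeg_lb v) C
    · rw [if_neg hv, one_mul]
      apply pow_le_pow_left₀ (by positivity)
      exact_mod_cast Finset.card_le_card (BadNbrs_subset G B S T v)

lemma badC_bound (hγn : 0 < γ * (A.card : ℝ)) (hn : 0 < (A.card : ℝ))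
    (hdeg_lb : ∀ v, γ * (A.card : ℝ) ≤ ((Nbrs G v).card : ℝ))
    (hdeg_ub : ∀ v, ((Nbrs G v).card : ℝ) ≤ (A.card : ℝ)) :
    ((BadSet G C B S T).card : ℝ) ≤
      Real.exp (-((C : ℝ) * (∑ a ∈ S, ((Nbrs G a \ T).card : ℝ)) / A.card)) *
        ((OmegaSet G C).card : ℝ) := by
  set n : ℝ := (A.card : ℝ)
  have key := bad_le_general G C B S T
      (fun v => if v ∈ S then Real.exp (-((C : ℝ) * ((Nbrs G v \ T).card : ℝ) / n)) else 1)
      (fun v => ?_)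
  · calc ((BadSet G C B S T).card : ℝ) ≤ _ := key
      _ = _ := by
        congr 1
        rw [Finset.prod_ite_mem univ S _, Finset.univ_inter, ← Real.exp_sum]
        congr 1
        rw [sum_neg_distrib, Finset.mul_sum, Finset.sum_div]
  · skip
    by_cases hv : v ∈ S
    · rw [if_pos hv]
      set w : ℝ := ((Nbrs G v \ T).card : ℝ) with hw
      set x : ℝ := ((Nbrs G v ∩ T).card : ℝ) with hx
      set D : ℝ := ((Nbrs G v).card : ℝ) with hD
      have hDpos : 0 < D := lt_of_lt_of_le hγn (hdeg_lb v)
      have hxw : x + w = D := by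
        rw [hx, hw, hD]
        exact_mod_cast Finset.card_inter_add_card_sdiff (Nbrs G v) T
      have hw0 : 0 ≤ w := by positivity
      have hbn : BadNbrs G B S T v = Nbrs G v ∩ T := by rw [BadNbrs, if_pos hv]
      have h2 : (1 : ℝ) - w / D ≤ Real.exp (-(w / D)) := by
        have := Real.add_one_le_exp (-(w / D))
        linarith
      have h3 : Real.exp (-(w / D)) ≤ Real.exp (-(w / n)) := by
        apply Real.exp_le_exp.mpr
        have : w / n ≤ w / D := div_le_div_of_nonneg_left hw0 hDpos (hdeg_ub v)
        linarith
      have h4 : x ≤ Real.exp (-(w / n)) * D := by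
        have h5 : x = D * (1 - w / D) := by
          field_simp
          linarith [hxw]
        rw [h5]
        calc D * (1 - w / D) ≤ D * Real.exp (-(w / D)) := by
              apply mul_le_mul_of_nonneg_left h2 (le_of_lt hDpos)
          _ ≤ D * Real.exp (-(w / n)) := by
              apply mul_le_mul_of_nonneg_left h3 (le_of_lt hDpos)
          _ = Real.exp (-(w / n)) * D := by ring
      calc ((BadNbrs G B S T v).card : ℝ) ^ C = x ^ C := by rw [hbn]
        _ ≤ (Real.exp (-(w / n)) * D) ^ C := by
            apply pow_le_pow_left₀ (by positivity) h4
        _ = Real.exp (-(w / n)) ^ C * D ^ C := mul_pow _ _ _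
        _ = Real.exp (-((C : ℝ) * w / n)) * D ^ C := by
            rw [← Real.exp_nat_mul]
            congr 1
            ring
    · rw [if_neg hv, one_mul]
      apply pow_le_pow_left₀ (by positivity)
      exact_mod_cast Finset.card_le_card (BadNbrs_subset G B S T v)

end Bounds

lemma hasPM_of_hall {V : Type} [Fintype V] [DecidableEq V]
    (H : SimpleGraph V) [DecidableRel H.Adj] (A B : Finset V) (hd : Disjoint A B)
    (hu : A ∪ B = Finset.univ) (hcard : A.card = B.card)
    (hall : ∀ S ⊆ A, S.card ≤ (B.filter (fun b => ∃ a ∈ S, H.Adj a b)).card) :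
    HasPM H := by
  classical
  set t : ↥A → Finset V := fun a => B.filter (fun b => H.Adj a.1 b) with ht
  have hcond : ∀ s : Finset ↥A, s.card ≤ (s.biUnion t).card := by
    intro s
    have hsub : s.image Subtype.val ⊆ A := by
      intro x hx
      obtain ⟨a, _, rfl⟩ := Finset.mem_image.mp hx
      exact a.2
    have : s.biUnion t = B.filter (fun b => ∃ a ∈ s.image Subtype.val, H.Adj a b) := by
      ext b
      simp only [Finset.mem_biUnion, ht, Finset.mem_filter, Finset.mem_image]
      constructor
      · rintro ⟨a, ha, hb, hadj⟩
        exact ⟨hb, a.1, ⟨a, ha, rfl⟩, hadj⟩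
      · rintro ⟨hb, x, ⟨a, ha, rfl⟩, hadj⟩
        exact ⟨a, ha, hb, hadj⟩
    rw [this]
    calc s.card = (s.image Subtype.val).card :=
          (Finset.card_image_of_injective s Subtype.val_injective).symm
      _ ≤ _ := hall _ hsub
  obtain ⟨f, hfinj, hf⟩ := (Finset.all_card_le_biUnion_card_iff_exists_injective t).mp hcond
  have hfB : ∀ a, f a ∈ B := fun a => (Finset.mem_filter.mp (hf a)).1
  have hfadj : ∀ a, H.Adj a.1 (f a) := fun a => (Finset.mem_filter.mp (hf a)).2
  set f' : ↥A → ↥B := fun a => ⟨f a, hfB a⟩ with hf'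
  have hf'inj : Function.Injective f' := fun a b hab => hfinj (congrArg Subtype.val hab)
  have hbij : Function.Bijective f' := by
    rw [Fintype.bijective_iff_injective_and_card]
    exact ⟨hf'inj, by simp [Fintype.card_coe, hcard]⟩
  set e := Equiv.ofBijective f' hbij with he
  set M : H.Subgraph :=
    { verts := Set.univ
      Adj := fun u v => (∃ h : u ∈ A, f ⟨u, h⟩ = v) ∨ (∃ h : v ∈ A, f ⟨v, h⟩ = u)
      adj_sub := by
        rintro u v (⟨h, rfl⟩ | ⟨h, rfl⟩)
        · exact hfadj ⟨u, h⟩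
        · exact (hfadj ⟨v, h⟩).symm
      edge_vert := fun _ => Set.mem_univ _
      symm := by
        constructor
        rintro u v (h | h)
        · exact Or.inr h
        · exact Or.inl h } with hM
  refine ⟨M, SimpleGraph.Subgraph.isPerfectMatching_iff.mpr fun v => ?_⟩
  by_cases hvA : v ∈ A
  · refine ⟨f ⟨v, hvA⟩, Or.inl ⟨hvA, rfl⟩, ?_⟩
    rintro w (⟨h, rfl⟩ | ⟨h, hw⟩)
    · rfl
    · exact absurd (hw ▸ hfB ⟨w, h⟩) (Finset.disjoint_left.mp hd hvA)
  · have hvB : v ∈ B := by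
      have : v ∈ A ∪ B := hu ▸ Finset.mem_univ v
      exact (Finset.mem_union.mp this).resolve_left hvA
    refine ⟨(e.symm ⟨v, hvB⟩).1, Or.inr ⟨(e.symm ⟨v, hvB⟩).2, ?_⟩, ?_⟩
    · have := e.apply_symm_apply ⟨v, hvB⟩
      have h2 : f' (e.symm ⟨v, hvB⟩) = ⟨v, hvB⟩ := this
      simpa [hf', Subtype.ext_iff] using h2
    · rintro w (⟨h, _⟩ | ⟨h, hw⟩)
      · exact absurd h hvA
      · have h2 : e ⟨w, h⟩ = ⟨v, hvB⟩ := Subtype.ext hw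
        have h3 : (⟨w, h⟩ : ↥A) = e.symm ⟨v, hvB⟩ := by
          rw [← h2, Equiv.symm_apply_apply]
        exact congrArg Subtype.val h3

lemma exists_bad_pair {V : Type} [Fintype V] [DecidableEq V] (G : SimpleGraph V) [DecidableRel G.Adj]
    (C : ℕ) (hC : 0 < C) (A B : Finset V) (hd : Disjoint A B)
    (hu : A ∪ B = Finset.univ) (hAB : A.card = B.card)
    (hbip : ∀ u v, G.Adj u v → (u ∈ A ∧ v ∈ B) ∨ (u ∈ B ∧ v ∈ A))
    (c : V → Fin C → V) (hc : ∀ v i, G.Adj v (c v i))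
    (hnpm : ¬ HasPM (chosenGraph C c)) :
    ∃ S T : Finset V, S ⊆ A ∧ T ⊆ B ∧ T.card = S.card ∧ 1 ≤ S.card ∧ S.card < A.card ∧
      c ∈ BadSet G C B S T := by
  classical
  set H := chosenGraph C c with hH
  haveI : DecidableRel H.Adj := Classical.decRel _
  have hedge : ∀ v i, H.Adj v (c v i) := by
    intro v i
    rw [hH, chosenGraph, SimpleGraph.fromEdgeSet_adj]
    exact ⟨⟨v, i, rfl⟩, (hc v i).ne⟩
  obtain ⟨S, hSA, hlt⟩ : ∃ S ⊆ A,
      (B.filter (fun b => ∃ a ∈ S, H.Adj a b)).card < S.card := by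
    by_contra h
    push_neg at h
    exact hnpm (hasPM_of_hall H A B hd hu hAB h)
  set NS := B.filter (fun b => ∃ a ∈ S, H.Adj a b) with hNS
  have hS1 : 1 ≤ S.card := Nat.lt_of_le_of_lt (Nat.zero_le _) hlt
  have hbipS : ∀ v ∈ A, ∀ i : Fin C, c v i ∈ B := by
    intro v hv i
    rcases hbip v (c v i) (hc v i) with ⟨_, h2⟩ | ⟨h1, _⟩
    · exact h2
    · exact absurd hv (Finset.disjoint_right.mp hd h1)
  have hbipB : ∀ v ∈ B, ∀ i : Fin C, c v i ∈ A := by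
    intro v hv i
    rcases hbip v (c v i) (hc v i) with ⟨h1, _⟩ | ⟨_, h2⟩
    · exact absurd hv (Finset.disjoint_left.mp hd h1)
    · exact h2
  have hSlt : S.card < A.card := by
    rcases lt_or_ge S.card A.card with h | h
    · exact h
    · exfalso
      have hSeq : S = A := Finset.eq_of_subset_of_card_le hSA h
      have hBNS : B ⊆ NS := by
        intro b hb
        have haA : c b ⟨0, hC⟩ ∈ A := hbipB b hb ⟨0, hC⟩
        refine Finset.mem_filter.mpr ⟨hb, c b ⟨0, hC⟩, ?_, (hedge b ⟨0, hC⟩).symm⟩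
        rw [hSeq]; exact haA
      have : NS = B := Finset.Subset.antisymm (Finset.filter_subset _ _) hBNS
      rw [this, ← hAB, ← hSeq] at hlt
      exact lt_irrefl _ hlt
  obtain ⟨T, hNT, hTB, hTcard⟩ :=
    Finset.exists_subsuperset_card_eq (Finset.filter_subset _ B) (le_of_lt hlt)
      (le_trans (Finset.card_le_card hSA) (le_of_eq hAB))
  refine ⟨S, T, hSA, hTB, hTcard, hS1, hSlt, ?_⟩
  rw [BadSet, Fintype.mem_piFinset]
  intro v
  rw [Fintype.mem_piFinset]
  intro i
  have hNmem : c v i ∈ Nbrs G v := Finset.mem_filter.mpr ⟨Finset.mem_univ _, hc v i⟩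
  rw [BadNbrs]
  split_ifs with h1 h2
  · refine Finset.mem_inter.mpr ⟨hNmem, hNT ?_⟩
    refine Finset.mem_filter.mpr ⟨hbipS v (hSA h1) i, v, h1, hedge v i⟩
  · refine Finset.mem_sdiff.mpr ⟨hNmem, fun hs => ?_⟩
    have hvB : v ∈ B := (Finset.mem_sdiff.mp h2).1
    have : v ∈ NS := Finset.mem_filter.mpr ⟨hvB, c v i, hs, (hedge v i).symm⟩
    exact (Finset.mem_sdiff.mp h2).2 (hNT this)
  · exact hNmem

lemma pow_self_le_three_pow_mul_factorial (s : ℕ) :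
    (s : ℝ) ^ s ≤ 3 ^ s * (s.factorial : ℝ) := by
  induction s with
  | zero => simp
  | succ m ih =>
    have hstep : ((m + 1 : ℕ) : ℝ) ^ m ≤ 3 * (m : ℝ) ^ m := by
      rcases Nat.eq_zero_or_pos m with rfl | hm
      · norm_num
      · have hmpos : (0 : ℝ) < m := by exact_mod_cast hm
        have h1 : ((m + 1 : ℕ) : ℝ) ≤ (m : ℝ) * Real.exp (1 / m) := by
          have := Real.add_one_le_exp (1 / (m : ℝ))
          have h2 : (m : ℝ) * (1 / m + 1) ≤ (m : ℝ) * Real.exp (1 / m) := by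
            exact mul_le_mul_of_nonneg_left this (le_of_lt hmpos)
          have h3 : (m : ℝ) * (1 / m + 1) = m + 1 := by field_simp; ring
          push_cast
          rw [h3] at h2; linarith
        have h4 : ((m + 1 : ℕ) : ℝ) ^ m ≤ ((m : ℝ) * Real.exp (1 / m)) ^ m :=
          pow_le_pow_left₀ (by positivity) h1 m
        have h5 : ((m : ℝ) * Real.exp (1 / m)) ^ m = (m : ℝ) ^ m * Real.exp 1 := by
          rw [mul_pow, ← Real.exp_nat_mul]
          congr 2
          field_simp
        have h6 : Real.exp 1 ≤ 3 := by
          have := Real.exp_one_lt_d9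
          linarith
        calc ((m + 1 : ℕ) : ℝ) ^ m ≤ (m : ℝ) ^ m * Real.exp 1 := h5 ▸ h4
          _ ≤ (m : ℝ) ^ m * 3 := by
              exact mul_le_mul_of_nonneg_left h6 (by positivity)
          _ = 3 * (m : ℝ) ^ m := by ring
    have hm1 : (0 : ℝ) ≤ ((m + 1 : ℕ) : ℝ) := by positivity
    calc ((m + 1 : ℕ) : ℝ) ^ (m + 1) = ((m + 1 : ℕ) : ℝ) * ((m + 1 : ℕ) : ℝ) ^ m := by ring
      _ ≤ ((m + 1 : ℕ) : ℝ) * (3 * (m : ℝ) ^ m) := by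
          exact mul_le_mul_of_nonneg_left hstep hm1
      _ ≤ ((m + 1 : ℕ) : ℝ) * (3 * (3 ^ m * (m.factorial : ℝ))) := by
          have : (3:ℝ) * (m:ℝ)^m ≤ 3 * (3^m * (m.factorial : ℝ)) := by linarith [ih]
          exact mul_le_mul_of_nonneg_left this hm1
      _ = 3 ^ (m + 1) * (((m + 1) * m.factorial : ℕ) : ℝ) := by push_cast; ring
      _ = 3 ^ (m + 1) * ((m + 1).factorial : ℝ) := by rw [Nat.factorial_succ]

lemma choose_le_ratio_pow {n s : ℕ} (hs : 1 ≤ s) :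
    (n.choose s : ℝ) ≤ (3 * n / s) ^ s := by
  have hs0 : (0 : ℝ) < s := by exact_mod_cast hs
  have hfac : (0 : ℝ) < (s.factorial : ℝ) := by exact_mod_cast Nat.factorial_pos s
  have h1 : (n.choose s : ℝ) ≤ (n : ℝ) ^ s / (s.factorial : ℝ) := by
    have := Nat.choose_le_pow_div (α := ℝ) s n
    simpa using this
  refine h1.trans ?_
  rw [div_le_iff₀ hfac]
  have key : (s : ℝ) ^ s ≤ 3 ^ s * (s.factorial : ℝ) := pow_self_le_three_pow_mul_factorial s
  have hss : (0 : ℝ) < (s : ℝ) ^ s := by positivity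
  have : (3 * (n:ℝ) / s) ^ s = (3 ^ s * (n:ℝ) ^ s) / (s : ℝ) ^ s := by
    rw [div_pow, mul_pow]
  rw [this, div_mul_eq_mul_div, le_div_iff₀ hss]
  calc (n : ℝ) ^ s * (s:ℝ) ^ s ≤ (n:ℝ) ^ s * (3 ^ s * (s.factorial : ℝ)) := by
        exact mul_le_mul_of_nonneg_left key (by positivity)
    _ = 3 ^ s * (n:ℝ) ^ s * (s.factorial : ℝ) := by ring

lemma choose_le_two_pow' (n s : ℕ) : (n.choose s : ℝ) ≤ 2 ^ n := by
  have : n.choose s ≤ 2 ^ n := by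
    rcases le_or_gt s n with h | h
    · calc n.choose s ≤ ∑ m ∈ range (n + 1), n.choose m :=
            Finset.single_le_sum (f := fun m => n.choose m) (fun _ _ => Nat.zero_le _)
              (Finset.mem_range.mpr (Nat.lt_succ_of_le h))
        _ = 2 ^ n := Nat.sum_range_choose n
    · simp [Nat.choose_eq_zero_of_lt h]
  exact_mod_cast this

lemma case1_bound {n s C : ℕ} {γ α : ℝ} (hγ : 0 < γ) (hγ1 : γ ≤ 1)
    (hα : α = γ ^ 2 / 100) (hC5 : 5 ≤ C) (hn : 0 < n)
    (hs1 : 1 ≤ s) (hsα : (s : ℝ) ≤ α * n) :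
    (n.choose s : ℝ) ^ 2 * ((s : ℝ) / (γ * n)) ^ (C * s) ≤ (1 / 100 : ℝ) ^ s := by
  have hnR : (0 : ℝ) < n := by exact_mod_cast hn
  have hsR : (0 : ℝ) < s := by exact_mod_cast hs1
  have hb0 : (0 : ℝ) ≤ 3 * n / s := by positivity
  have h1 : (n.choose s : ℝ) ^ 2 ≤ ((3 * n / s) ^ s) ^ 2 :=
    pow_le_pow_left₀ (Nat.cast_nonneg _) (choose_le_ratio_pow hs1) 2
  have h2 : ((s : ℝ) / (γ * n)) ^ (C * s) = (((s : ℝ) / (γ * n)) ^ C) ^ s := by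
    rw [← pow_mul, mul_comm]
  set b : ℝ := (3 * n / s) ^ 2 * ((s : ℝ) / (γ * n)) ^ C with hbdef
  have hbs : b ^ s = ((3 * n / s) ^ s) ^ 2 * (((s : ℝ) / (γ * n)) ^ C) ^ s := by
    rw [hbdef, mul_pow]
    congr 1
    rw [← pow_mul, ← pow_mul, mul_comm 2 s]
  have hmain : (n.choose s : ℝ) ^ 2 * ((s : ℝ) / (γ * n)) ^ (C * s) ≤ b ^ s := by
    rw [h2, hbs]
    apply mul_le_mul h1 (le_refl _) (by positivity) (by positivity)
  refine hmain.trans ?_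
  apply pow_le_pow_left₀ (by positivity)
  -- b ≤ 1/100
  have hCsplit : C = (C - 2) + 2 := (Nat.sub_add_cancel (by omega)).symm
  have hsplit : ((s : ℝ) / (γ * n)) ^ C
      = ((s : ℝ) / (γ * n)) ^ (C - 2) * ((s : ℝ) / (γ * n)) ^ 2 := by
    conv_lhs => rw [hCsplit]
    rw [pow_add]
  have hb : b = (3 / γ) ^ 2 * ((s : ℝ) / (γ * n)) ^ (C - 2) := by
    rw [hbdef, hsplit]
    rw [show (3 * (n:ℝ) / s) ^ 2 * (((s:ℝ) / (γ * n)) ^ (C-2) * ((s:ℝ) / (γ * n)) ^ 2)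
        = ((3 * (n:ℝ) / s) * ((s:ℝ) / (γ * n))) ^ 2 * ((s:ℝ) / (γ * n)) ^ (C-2) by ring]
    congr 2
    field_simp
  have hxγ : (s : ℝ) / (γ * n) ≤ γ / 100 := by
    rw [div_le_div_iff₀ (by positivity) (by norm_num)]
    calc (s : ℝ) * 100 ≤ (α * n) * 100 := by linarith
      _ = γ * (γ * n) := by rw [hα]; ring
  have hpow : ((s : ℝ) / (γ * n)) ^ (C - 2) ≤ (γ / 100) ^ (C - 2) :=
    pow_le_pow_left₀ (by positivity) hxγ _
  have hCsplit2 : C - 2 = (C - 4) + 2 := by omega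
  have hfin : (γ / 100) ^ (C - 2) ≤ (γ / 100) ^ 2 := by
    rw [hCsplit2, pow_add]
    have h01 : (0:ℝ) ≤ γ / 100 := by positivity
    have h11 : (γ:ℝ) / 100 ≤ 1 := by linarith
    calc (γ/100) ^ (C-4) * (γ/100) ^ 2 ≤ 1 * (γ/100) ^ 2 := by
          apply mul_le_mul_of_nonneg_right (pow_le_one₀ h01 h11) (by positivity)
      _ = (γ/100) ^ 2 := one_mul _
  calc b ≤ (3 / γ) ^ 2 * (γ / 100) ^ 2 := by
        rw [hb]
        apply mul_le_mul_of_nonneg_left (hpow.trans hfin) (by positivity)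
    _ = (3 / 100) ^ 2 := by
        field_simp
    _ ≤ 1 / 100 := by norm_num

lemma four_le_exp : (4 : ℝ) ≤ Real.exp (3 / 2) := by
  have h1 : Real.exp (3 / 2) = Real.exp (3 / 32) ^ (16 : ℕ) := by
    rw [← Real.exp_nat_mul]
    norm_num
  have h2 : (35 / 32 : ℝ) ≤ Real.exp (3 / 32) := by
    have := Real.add_one_le_exp (3 / 32 : ℝ)
    linarith
  have h3 : ((35 / 32 : ℝ)) ^ (16:ℕ) ≤ Real.exp (3 / 32) ^ (16:ℕ) :=
    pow_le_pow_left₀ (by norm_num) h2 16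
  have h4 : (4 : ℝ) ≤ (35 / 32 : ℝ) ^ (16:ℕ) := by norm_num
  rw [h1]
  linarith

lemma case3_bound {n s C : ℕ} {γ α : ℝ} (hγ : 0 < γ)
    (hα : α = γ ^ 2 / 100) (hCge : 35000 / γ ^ 5 ≤ (C : ℝ)) (hn : 0 < n)
    (hsn : s ≤ n) (hsl : α * n ≤ (s : ℝ)) (hsu : α * n ≤ ((n - s : ℕ) : ℝ)) :
    (n.choose s : ℝ) ^ 2 *
      Real.exp (-((C : ℝ) * γ * ((s : ℝ) * ((n - s : ℕ) : ℝ)) / n)) ≤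
    Real.exp (-(2 * (n : ℝ))) := by
  have hnR : (0 : ℝ) < n := by exact_mod_cast hn
  have hα0 : 0 ≤ α := by rw [hα]; positivity
  have hαn : 0 ≤ α * n := by positivity
  have h4n : (n.choose s : ℝ) ^ 2 ≤ Real.exp (3 / 2) ^ n := by
    calc (n.choose s : ℝ) ^ 2 ≤ ((2:ℝ) ^ n) ^ 2 := by
          apply pow_le_pow_left₀ (by positivity) (choose_le_two_pow' n s)
      _ = (4 : ℝ) ^ n := by rw [← pow_mul, mul_comm, pow_mul]; norm_num
      _ ≤ Real.exp (3/2) ^ n := pow_le_pow_left₀ (by norm_num) four_le_exp n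
  have hexp : Real.exp (3/2) ^ n = Real.exp (3 / 2 * n) := by
    rw [← Real.exp_nat_mul]
    ring_nf
  have hprod : (α * n) * (α * n) ≤ (s : ℝ) * ((n - s : ℕ) : ℝ) :=
    mul_le_mul hsl hsu hαn (by positivity)
  have hCγ : (7 / 2 : ℝ) ≤ (C : ℝ) * γ * α ^ 2 := by
    have : (C : ℝ) * γ * α ^ 2 = (C : ℝ) * (γ ^ 5 / 10000) := by
      rw [hα]; ring
    rw [this]
    have hγ5 : (0:ℝ) < γ ^ 5 := by positivity
    have hmul := mul_le_mul_of_nonneg_right hCge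
      (le_of_lt (by positivity : (0:ℝ) < γ ^ 5 / 10000))
    have heq : 35000 / γ ^ 5 * (γ ^ 5 / 10000) = 7 / 2 := by
      field_simp
      ring
    linarith
  have harg : (7 / 2 : ℝ) * n ≤ (C : ℝ) * γ * ((s : ℝ) * ((n - s : ℕ) : ℝ)) / n := by
    rw [le_div_iff₀ hnR]
    calc (7/2 : ℝ) * n * n ≤ ((C : ℝ) * γ * α ^ 2) * (n * n) := by
          have := mul_le_mul_of_nonneg_right hCγ (by positivity : (0:ℝ) ≤ n * n)
          linarith
      _ = (C : ℝ) * γ * ((α * n) * (α * n)) := by ring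
      _ ≤ (C : ℝ) * γ * ((s : ℝ) * ((n - s : ℕ) : ℝ)) := by
          apply mul_le_mul_of_nonneg_left hprod (by positivity)
  calc (n.choose s : ℝ) ^ 2 * Real.exp (-((C : ℝ) * γ * ((s : ℝ) * ((n - s : ℕ) : ℝ)) / n))
      ≤ Real.exp (3/2 * n) * Real.exp (-(7/2 * n)) := by
        apply mul_le_mul (hexp ▸ h4n) _ (le_of_lt (Real.exp_pos _)) (by positivity)
        apply Real.exp_le_exp.mpr
        linarith
    _ = Real.exp (3/2 * n - 7/2 * n) := by rw [← Real.exp_add]; ring_nf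
    _ = Real.exp (-(2 * n)) := by ring_nf

lemma geom_tail_le (n : ℕ) : (∑ s ∈ Finset.Ico 1 n, (1 / 100 : ℝ) ^ s) ≤ 1 / 99 := by
  rcases le_or_gt 1 n with h | h
  · rw [geom_sum_Ico (by norm_num : (1/100 : ℝ) ≠ 1) h]
    have h0 : (0:ℝ) ≤ (1/100:ℝ) ^ n := by positivity
    rw [div_le_iff_of_neg (by norm_num : (1/100 : ℝ) - 1 < 0)]
    nlinarith
  · interval_cases n <;> simp

lemma n_exp_le {n : ℕ} (hn : 3 ≤ n) : (n : ℝ) * Real.exp (-(2 * n)) ≤ 1 / 5 := by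
  have hnR : (3 : ℝ) ≤ n := by exact_mod_cast hn
  have h1 : ((1:ℝ) + n) ^ 2 ≤ Real.exp (2 * n) := by
    have h2 : (1:ℝ) + n ≤ Real.exp n := by
      have := Real.add_one_le_exp (n : ℝ)
      linarith
    calc ((1:ℝ) + n) ^ 2 ≤ Real.exp (n : ℝ) ^ 2 := by
          apply pow_le_pow_left₀ (by linarith) h2
      _ = Real.exp (2 * n) := by rw [sq, ← Real.exp_add, two_mul]
  have h3 : (5:ℝ) * n ≤ Real.exp (2 * n) := by nlinarith
  have h4 : Real.exp (-(2 * (n:ℝ))) = 1 / Real.exp (2 * n) := by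
    rw [Real.exp_neg]; rw [one_div]
  rw [h4]
  rw [mul_one_div, div_le_div_iff₀ (Real.exp_pos _) (by norm_num)]
  linarith


lemma geom_tail_le' (n : ℕ) :
    (∑ s ∈ Finset.Ico 1 n, (1 / 100 : ℝ) ^ (n - s)) ≤ 1 / 99 := by
  have heq : (∑ s ∈ Finset.Ico 1 n, (1 / 100 : ℝ) ^ (n - s))
      = ∑ s ∈ Finset.Ico 1 n, (1 / 100 : ℝ) ^ s := by
    apply Finset.sum_nbij' (fun s => n - s) (fun s => n - s)
    · intro a ha
      rw [Finset.mem_Ico] at ha ⊢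
      omega
    · intro a ha
      rw [Finset.mem_Ico] at ha ⊢
      omega
    · intro a ha
      rw [Finset.mem_Ico] at ha
      omega
    · intro a ha
      rw [Finset.mem_Ico] at ha
      omega
    · intro a ha
      rfl
  rw [heq]
  exact geom_tail_le n

/-- In a `(d,δ)`-super-regular bipartite graph, if every vertex picks `C` uniformly random
neighbours (with repetition) then the graph of picked edges contains a perfect matching with
probability at least `3/4`. -/
theorem statement11 :
    ∀ d : ℝ, 0 < d →
    ∃ δ₀ : ℝ, 0 < δ₀ ∧ ∃ C : ℕ, 0 < C ∧ ∃ n₀ : ℕ,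
    ∀ δ : ℝ, 0 < δ → δ ≤ δ₀ → ∀ n : ℕ, n₀ ≤ n →
    ∀ (V : Type) (_ : Fintype V) (_ : DecidableEq V)
      (G : SimpleGraph V) (_ : DecidableRel G.Adj) (A B : Finset V),
    Disjoint A B → A ∪ B = Finset.univ → A.card = n → B.card = n →
    (∀ u v, G.Adj u v → (u ∈ A ∧ v ∈ B) ∨ (u ∈ B ∧ v ∈ A)) →
    IsSuperRegular G A B d δ →
    (3 / 4 : ℝ) ≤
      (Set.ncard {c : V → Fin C → V |
          (∀ v i, G.Adj v (c v i)) ∧ HasPM (chosenGraph C c)} : ℝ) /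
        (Set.ncard {c : V → Fin C → V | ∀ v i, G.Adj v (c v i)} : ℝ) := by
  intro d hd0
  refine ⟨d ^ 2 / 400, by positivity, Nat.ceil ((1120000 : ℝ) / d ^ 5) + 5, by omega, 10, ?_⟩
  intro δ hδ0 hδδ₀ n hn V _ _ G _ A B hdisj huniv hA hB hbip hsr
  classical
  set γ : ℝ := d / 2 with hγdef
  set α : ℝ := d ^ 2 / 400 with hαdef
  set C : ℕ := Nat.ceil ((1120000 : ℝ) / d ^ 5) + 5 with hCdef
  obtain ⟨⟨hdens, hpairs⟩, hdegA', hdegB'⟩ := hsr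
  have hCpos : 0 < C := by omega
  have hC5 : 5 ≤ C := by omega
  have hnpos : 0 < n := by omega
  have hnR : (0 : ℝ) < n := by exact_mod_cast hnpos
  have hγpos : 0 < γ := by rw [hγdef]; linarith
  -- d ≤ 1
  have hd1 : d ≤ 1 := by
    have hsum : (∑ v ∈ A, (nbrCount G v B : ℝ)) ≤ (A.card : ℝ) * B.card := by
      calc (∑ v ∈ A, (nbrCount G v B : ℝ)) ≤ ∑ _v ∈ A, (B.card : ℝ) := by
            apply Finset.sum_le_sum
            intro v _
            exact_mod_cast Finset.card_le_card (Finset.filter_subset _ _)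
        _ = (A.card : ℝ) * B.card := by rw [Finset.sum_const, nsmul_eq_mul]
    have hAB : (0:ℝ) < (A.card : ℝ) * B.card := by
      rw [hA, hB]; positivity
    rw [← hdens, pairDensity, div_le_one hAB]
    exact hsum
  have hγ1 : γ ≤ 1 := by rw [hγdef]; linarith
  have hαγ : α = γ ^ 2 / 100 := by rw [hαdef, hγdef]; ring
  have hδα : δ ≤ α := hδδ₀
  have hδγ : d - δ ≥ γ := by
    have : α ≤ d / 2 := by rw [hαdef]; nlinarith
    rw [hγdef]; linarith
  have hCge : 35000 / γ ^ 5 ≤ (C : ℝ) := by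
    have h1 : 35000 / γ ^ 5 = 1120000 / d ^ 5 := by
      rw [hγdef]; field_simp; ring
    rw [hCdef, h1]
    push_cast
    have := Nat.le_ceil ((1120000 : ℝ) / d ^ 5)
    linarith
  -- neighbourhood facts
  have hNbrA : ∀ v ∈ A, Nbrs G v = B.filter (fun w => G.Adj v w) := by
    intro v hv
    ext w
    simp only [Nbrs, Finset.mem_filter, Finset.mem_univ, true_and]
    constructor
    · intro hadj
      rcases hbip v w hadj with ⟨_, h2⟩ | ⟨h1, _⟩
      · exact ⟨h2, hadj⟩
      · exact absurd hv (Finset.disjoint_right.mp hdisj h1)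
    · exact fun h => h.2
  have hNbrB : ∀ v ∈ B, Nbrs G v = A.filter (fun w => G.Adj v w) := by
    intro v hv
    ext w
    simp only [Nbrs, Finset.mem_filter, Finset.mem_univ, true_and]
    constructor
    · intro hadj
      rcases hbip v w hadj with ⟨h1, _⟩ | ⟨_, h2⟩
      · exact absurd hv (Finset.disjoint_left.mp hdisj h1)
      · exact ⟨h2, hadj⟩
    · exact fun h => h.2
  have hmemAB : ∀ v : V, v ∈ A ∨ v ∈ B := by
    intro v
    have : v ∈ A ∪ B := huniv ▸ Finset.mem_univ v
    exact Finset.mem_union.mp this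
  have hdeg_lb : ∀ v, γ * (A.card : ℝ) ≤ ((Nbrs G v).card : ℝ) := by
    intro v
    rcases hmemAB v with hv | hv
    · rw [hNbrA v hv]
      have := hdegA' v hv
      rw [nbrCount] at this
      calc γ * (A.card : ℝ) ≤ (d - δ) * (B.card : ℝ) := by
            rw [hA, hB]
            apply mul_le_mul_of_nonneg_right hδγ (le_of_lt hnR)
        _ ≤ _ := this
    · rw [hNbrB v hv]
      have := hdegB' v hv
      rw [nbrCount] at this
      calc γ * (A.card : ℝ) ≤ (d - δ) * (A.card : ℝ) := by
            apply mul_le_mul_of_nonneg_right hδγ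
            rw [hA]; exact le_of_lt hnR
        _ ≤ _ := this
  have hdeg_ub : ∀ v, ((Nbrs G v).card : ℝ) ≤ (A.card : ℝ) := by
    intro v
    rcases hmemAB v with hv | hv
    · rw [hNbrA v hv]
      have : (B.filter (fun w => G.Adj v w)).card ≤ B.card :=
        Finset.card_le_card (Finset.filter_subset _ _)
      rw [hA]
      calc ((B.filter (fun w => G.Adj v w)).card : ℝ) ≤ (B.card : ℝ) := by exact_mod_cast this
        _ = (n : ℝ) := by rw [hB]
    · rw [hNbrB v hv]
      exact_mod_cast Finset.card_le_card (Finset.filter_subset _ _)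
  have hγn : 0 < γ * (A.card : ℝ) := by rw [hA]; positivity
  -- sets to finsets
  have hsetden : {c : V → Fin C → V | ∀ v i, G.Adj v (c v i)} = ↑(OmegaSet G C) := by
    ext c
    simp [OmegaSet, Fintype.mem_piFinset, Nbrs]
  have hsetnum : {c : V → Fin C → V | (∀ v i, G.Adj v (c v i)) ∧ HasPM (chosenGraph C c)}
      = ↑((OmegaSet G C).filter (fun c => HasPM (chosenGraph C c))) := by
    ext c
    simp [OmegaSet, Fintype.mem_piFinset, Nbrs]
  rw [hsetden, hsetnum, Set.ncard_coe_finset, Set.ncard_coe_finset]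
  set Ω := OmegaSet G C with hΩ
  set Good := Ω.filter (fun c => HasPM (chosenGraph C c)) with hGood
  set Bad := Ω.filter (fun c => ¬ HasPM (chosenGraph C c)) with hBad
  have hsplitcard : Good.card + Bad.card = Ω.card := by
    rw [hGood, hBad]
    exact Finset.card_filter_add_card_filter_not _
  have hΩpos : 0 < Ω.card := by
    rw [hΩ, card_OmegaSet]
    apply Finset.prod_pos
    intro v _
    apply pow_pos
    have := hdeg_lb v
    have h0 : (0:ℝ) < ((Nbrs G v).card : ℝ) := lt_of_lt_of_le hγn this
    exact_mod_cast h0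
  have hΩposR : (0:ℝ) < (Ω.card : ℝ) := by exact_mod_cast hΩpos
  -- the key estimate
  have hkey : (Bad.card : ℝ) ≤ (1 / 4 : ℝ) * (Ω.card : ℝ) := by
    have hsub : Bad ⊆ (Finset.Ico 1 n).biUnion (fun s =>
        ((A.powersetCard s) ×ˢ (B.powersetCard s)).biUnion
          (fun p => BadSet G C B p.1 p.2)) := by
      intro c hc
      rw [hBad, Finset.mem_filter] at hc
      obtain ⟨hcΩ, hnpm⟩ := hc
      have hc' : ∀ v i, G.Adj v (c v i) := by
        intro v i
        have h1 := Fintype.mem_piFinset.mp hcΩ v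
        have h2 := Fintype.mem_piFinset.mp h1 i
        simpa [Nbrs] using h2
      obtain ⟨S, T, hSA, hTB, hT, hS1, hSlt, hmem⟩ :=
        exists_bad_pair G C hCpos A B hdisj huniv (by rw [hA, hB]) hbip c hc' hnpm
      apply Finset.mem_biUnion.mpr
      refine ⟨S.card, Finset.mem_Ico.mpr ⟨hS1, by rw [← hA]; exact hSlt⟩, ?_⟩
      apply Finset.mem_biUnion.mpr
      refine ⟨(S, T), ?_, hmem⟩
      rw [Finset.mem_product]
      exact ⟨Finset.mem_powersetCard.mpr ⟨hSA, rfl⟩,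
        Finset.mem_powersetCard.mpr ⟨hTB, hT⟩⟩
    have h1 : Bad.card ≤ ∑ s ∈ Finset.Ico 1 n,
        ∑ p ∈ (A.powersetCard s ×ˢ B.powersetCard s), (BadSet G C B p.1 p.2).card := by
      calc Bad.card ≤ _ := Finset.card_le_card hsub
        _ ≤ ∑ s ∈ Finset.Ico 1 n, (((A.powersetCard s) ×ˢ (B.powersetCard s)).biUnion
              (fun p => BadSet G C B p.1 p.2)).card := Finset.card_biUnion_le
        _ ≤ _ := Finset.sum_le_sum (fun s _ => Finset.card_biUnion_le)
    set F : ℕ → ℝ := fun s =>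
      if (s : ℝ) ≤ α * n then (1/100 : ℝ) ^ s
      else if ((n - s : ℕ) : ℝ) ≤ α * n then (1/100 : ℝ) ^ (n - s)
      else Real.exp (-(2 * (n : ℝ))) with hF
    have hper : ∀ s ∈ Finset.Ico 1 n,
        (∑ p ∈ (A.powersetCard s ×ˢ B.powersetCard s),
          ((BadSet G C B p.1 p.2).card : ℝ)) ≤ F s * (Ω.card : ℝ) := by
      intro s hs
      rw [Finset.mem_Ico] at hs
      obtain ⟨hs1, hsn⟩ := hs
      have hsle : s ≤ n := le_of_lt hsn
      have hns1 : 1 ≤ n - s := by omega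
      have hcardP : (A.powersetCard s ×ˢ B.powersetCard s).card = n.choose s * n.choose s := by
        rw [Finset.card_product, Finset.card_powersetCard, Finset.card_powersetCard, hA, hB]
      have hsum_aux : ∀ K : ℝ,
          (∀ p ∈ A.powersetCard s ×ˢ B.powersetCard s,
            ((BadSet G C B p.1 p.2).card : ℝ) ≤ K) →
          (∑ p ∈ A.powersetCard s ×ˢ B.powersetCard s,
            ((BadSet G C B p.1 p.2).card : ℝ)) ≤ (n.choose s : ℝ) ^ 2 * K := by
        intro K hK
        calc (∑ p ∈ A.powersetCard s ×ˢ B.powersetCard s,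
              ((BadSet G C B p.1 p.2).card : ℝ))
            ≤ ∑ _p ∈ A.powersetCard s ×ˢ B.powersetCard s, K := Finset.sum_le_sum hK
          _ = ((A.powersetCard s ×ˢ B.powersetCard s).card : ℝ) * K := by
              rw [Finset.sum_const, nsmul_eq_mul]
          _ = (n.choose s : ℝ) ^ 2 * K := by
              rw [hcardP]; push_cast; ring
      by_cases hc1 : (s : ℝ) ≤ α * n
      · have hbound : ∀ p ∈ A.powersetCard s ×ˢ B.powersetCard s,
            ((BadSet G C B p.1 p.2).card : ℝ)
              ≤ ((s : ℝ) / (γ * A.card)) ^ (C * s) * (Ω.card : ℝ) := by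
          intro p hp
          rw [Finset.mem_product] at hp
          obtain ⟨hpS, hpT⟩ := hp
          rw [Finset.mem_powersetCard] at hpS hpT
          have hb := badA_bound G C A B p.1 p.2 γ hγn hdeg_lb
            (by rw [hpT.2, hpS.2])
          rwa [hpS.2] at hb
        have h2 := hsum_aux _ hbound
        calc (∑ p ∈ A.powersetCard s ×ˢ B.powersetCard s,
              ((BadSet G C B p.1 p.2).card : ℝ))
            ≤ (n.choose s : ℝ) ^ 2 * (((s : ℝ) / (γ * A.card)) ^ (C * s) * (Ω.card : ℝ)) := h2
          _ = ((n.choose s : ℝ) ^ 2 * ((s : ℝ) / (γ * n)) ^ (C * s)) * (Ω.card : ℝ) := by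
              rw [hA]; ring
          _ ≤ (1/100 : ℝ) ^ s * (Ω.card : ℝ) := by
              apply mul_le_mul_of_nonneg_right
                (case1_bound hγpos hγ1 hαγ hC5 hnpos hs1 hc1) (le_of_lt hΩposR)
          _ = F s * (Ω.card : ℝ) := by rw [hF]; simp only [if_pos hc1]
      · by_cases hc2 : ((n - s : ℕ) : ℝ) ≤ α * n
        · have hbound : ∀ p ∈ A.powersetCard s ×ˢ B.powersetCard s,
              ((BadSet G C B p.1 p.2).card : ℝ)
                ≤ (((n - s : ℕ) : ℝ) / (γ * (n:ℝ))) ^ (C * (n - s)) * (Ω.card : ℝ) := by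
            intro p hp
            rw [Finset.mem_product] at hp
            obtain ⟨hpS, hpT⟩ := hp
            rw [Finset.mem_powersetCard] at hpS hpT
            have hb := badB_bound G C A B p.1 p.2 γ hγn hdeg_lb hdisj hpS.1 hpT.1
              (by rw [hpT.2, hpS.2]) (by rw [hA, hB])
              (fun v hv => by rw [hNbrB v hv]; exact Finset.filter_subset _ _)
            rwa [hpS.2, hA] at hb
          have h2 := hsum_aux _ hbound
          have hch : n.choose s = n.choose (n - s) := (Nat.choose_symm hsle).symm
          calc (∑ p ∈ A.powersetCard s ×ˢ B.powersetCard s,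
                ((BadSet G C B p.1 p.2).card : ℝ))
              ≤ (n.choose s : ℝ) ^ 2 *
                  ((((n - s : ℕ) : ℝ) / (γ * (n:ℝ))) ^ (C * (n - s)) * (Ω.card : ℝ)) := h2
            _ = ((n.choose (n - s) : ℝ) ^ 2 *
                  (((n - s : ℕ) : ℝ) / (γ * n)) ^ (C * (n - s))) * (Ω.card : ℝ) := by
                rw [← hch]; ring
            _ ≤ (1/100 : ℝ) ^ (n - s) * (Ω.card : ℝ) := by
                apply mul_le_mul_of_nonneg_right
                  (case1_bound hγpos hγ1 hαγ hC5 hnpos hns1 hc2) (le_of_lt hΩposR)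
            _ = F s * (Ω.card : ℝ) := by rw [hF]; simp only [if_neg hc1, if_pos hc2]
        · push_neg at hc1 hc2
          have hαs : α * n ≤ (s : ℝ) := le_of_lt hc1
          have hαns : α * n ≤ ((n - s : ℕ) : ℝ) := le_of_lt hc2
          have hbound : ∀ p ∈ A.powersetCard s ×ˢ B.powersetCard s,
              ((BadSet G C B p.1 p.2).card : ℝ)
                ≤ Real.exp (-((C : ℝ) * γ * ((s : ℝ) * ((n - s : ℕ) : ℝ)) / n)) *
                    (Ω.card : ℝ) := by
            intro p hp
            rw [Finset.mem_product] at hp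
            obtain ⟨hpS, hpT⟩ := hp
            rw [Finset.mem_powersetCard] at hpS hpT
            obtain ⟨hSA, hScard⟩ := hpS
            obtain ⟨hTB, hTcard⟩ := hpT
            have hb := badC_bound G C A B p.1 p.2 γ hγn (by rw [hA]; exact hnR)
              hdeg_lb hdeg_ub
            refine hb.trans ?_
            apply mul_le_mul_of_nonneg_right _ (le_of_lt hΩposR)
            apply Real.exp_le_exp.mpr
            rw [neg_le_neg_iff]
            -- lower bound on the edge count W
            set W : ℝ := ∑ a ∈ p.1, ((Nbrs G a \ p.2).card : ℝ) with hW
            have hWnbr : ∀ a ∈ p.1, (Nbrs G a \ p.2) =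
                (B \ p.2).filter (fun w => G.Adj a w) := by
              intro a ha
              rw [hNbrA a (hSA ha)]
              ext w
              simp only [Finset.mem_sdiff, Finset.mem_filter]
              tauto
            have hBT : (B \ p.2).card = n - s := by
              rw [Finset.card_sdiff_of_subset hTB, hB, hTcard]
            have hQpos : (0 : ℝ) < (s : ℝ) * ((n - s : ℕ) : ℝ) := by
              have h1 : (0:ℝ) < (s:ℝ) := by exact_mod_cast hs1
              have h2 : (0:ℝ) < ((n - s : ℕ):ℝ) := by exact_mod_cast hns1
              positivity
            have hdensW : pairDensity G p.1 (B \ p.2) =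
                W / ((s : ℝ) * ((n - s : ℕ) : ℝ)) := by
              rw [pairDensity, hScard, hBT, hW]
              congr 1
              apply Finset.sum_congr rfl
              intro a ha
              rw [nbrCount, ← hWnbr a ha]
            have hreg := hpairs p.1 hSA (B \ p.2) Finset.sdiff_subset
              (by rw [hA, hScard]
                  calc δ * (n:ℝ) ≤ α * n := by
                        apply mul_le_mul_of_nonneg_right hδα (le_of_lt hnR)
                    _ ≤ (s:ℝ) := hαs)
              (by rw [hB, hBT]
                  calc δ * (n:ℝ) ≤ α * n := by
                        apply mul_le_mul_of_nonneg_right hδα (le_of_lt hnR)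
                    _ ≤ ((n - s : ℕ):ℝ) := hαns)
            have hdlow : γ ≤ W / ((s : ℝ) * ((n - s : ℕ) : ℝ)) := by
              rw [← hdensW]
              have := (abs_le.mp hreg).1
              linarith
            have hWlow : γ * ((s : ℝ) * ((n - s : ℕ) : ℝ)) ≤ W := by
              rw [le_div_iff₀ hQpos] at hdlow
              linarith
            rw [hA]
            have hq : (C : ℝ) * γ * ((s : ℝ) * ((n - s : ℕ) : ℝ)) ≤ (C : ℝ) * W := by
              calc (C : ℝ) * γ * ((s : ℝ) * ((n - s : ℕ) : ℝ))
                = (C : ℝ) * (γ * ((s : ℝ) * ((n - s : ℕ) : ℝ))) := by ring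
              _ ≤ (C : ℝ) * W := by
                  apply mul_le_mul_of_nonneg_left hWlow (by positivity)
            exact (div_le_div_iff_of_pos_right hnR).mpr hq
          have h2 := hsum_aux _ hbound
          calc (∑ p ∈ A.powersetCard s ×ˢ B.powersetCard s,
                ((BadSet G C B p.1 p.2).card : ℝ))
              ≤ (n.choose s : ℝ) ^ 2 *
                  (Real.exp (-((C : ℝ) * γ * ((s : ℝ) * ((n - s : ℕ) : ℝ)) / n)) *
                    (Ω.card : ℝ)) := h2
            _ = ((n.choose s : ℝ) ^ 2 *
                  Real.exp (-((C : ℝ) * γ * ((s : ℝ) * ((n - s : ℕ) : ℝ)) / n))) *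
                    (Ω.card : ℝ) := by ring
            _ ≤ Real.exp (-(2 * (n:ℝ))) * (Ω.card : ℝ) := by
                apply mul_le_mul_of_nonneg_right
                  (case3_bound hγpos hαγ hCge hnpos hsle hαs hαns) (le_of_lt hΩposR)
            _ = F s * (Ω.card : ℝ) := by
                rw [hF]
                simp only [if_neg (not_le.mpr hc1), if_neg (not_le.mpr hc2)]
    have hFsum : (∑ s ∈ Finset.Ico 1 n, F s) ≤ 1 / 4 := by
      have hFle : ∀ s ∈ Finset.Ico 1 n,
          F s ≤ (1/100 : ℝ) ^ s + (1/100 : ℝ) ^ (n - s) + Real.exp (-(2 * (n:ℝ))) := by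
        intro s _
        simp only [hF]
        have e1 : (0:ℝ) ≤ (1/100 : ℝ) ^ s := by positivity
        have e2 : (0:ℝ) ≤ (1/100 : ℝ) ^ (n - s) := by positivity
        have e3 : (0:ℝ) ≤ Real.exp (-(2 * (n:ℝ))) := le_of_lt (Real.exp_pos _)
        split_ifs <;> linarith
      calc (∑ s ∈ Finset.Ico 1 n, F s)
          ≤ ∑ s ∈ Finset.Ico 1 n,
              ((1/100 : ℝ) ^ s + (1/100 : ℝ) ^ (n - s) + Real.exp (-(2 * (n:ℝ)))) :=
            Finset.sum_le_sum hFle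
        _ = (∑ s ∈ Finset.Ico 1 n, (1/100 : ℝ) ^ s)
            + (∑ s ∈ Finset.Ico 1 n, (1/100 : ℝ) ^ (n - s))
            + (∑ _s ∈ Finset.Ico 1 n, Real.exp (-(2 * (n:ℝ)))) := by
            rw [← Finset.sum_add_distrib, ← Finset.sum_add_distrib]
        _ ≤ 1/99 + 1/99 + (n : ℝ) * Real.exp (-(2 * (n:ℝ))) := by
            have g1 := geom_tail_le n
            have g2 := geom_tail_le' n
            have g3 : (∑ _s ∈ Finset.Ico 1 n, Real.exp (-(2 * (n:ℝ))))
                ≤ (n : ℝ) * Real.exp (-(2 * (n:ℝ))) := by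
              rw [Finset.sum_const, nsmul_eq_mul, Nat.card_Ico]
              apply mul_le_mul_of_nonneg_right _ (le_of_lt (Real.exp_pos _))
              have : n - 1 ≤ n := by omega
              exact_mod_cast this
            linarith
        _ ≤ 1/99 + 1/99 + 1/5 := by
            have := n_exp_le (by omega : 3 ≤ n)
            linarith
        _ ≤ 1/4 := by norm_num
    calc (Bad.card : ℝ)
        ≤ ((∑ s ∈ Finset.Ico 1 n,
            ∑ p ∈ (A.powersetCard s ×ˢ B.powersetCard s),
              (BadSet G C B p.1 p.2).card : ℕ) : ℝ) := by exact_mod_cast h1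
      _ = ∑ s ∈ Finset.Ico 1 n,
            ∑ p ∈ (A.powersetCard s ×ˢ B.powersetCard s),
              ((BadSet G C B p.1 p.2).card : ℝ) := by push_cast; rfl
      _ ≤ ∑ s ∈ Finset.Ico 1 n, F s * (Ω.card : ℝ) := Finset.sum_le_sum hper
      _ = (∑ s ∈ Finset.Ico 1 n, F s) * (Ω.card : ℝ) := by rw [← Finset.sum_mul]
      _ ≤ (1/4 : ℝ) * (Ω.card : ℝ) :=
          mul_le_mul_of_nonneg_right hFsum (le_of_lt hΩposR)
  rw [le_div_iff₀ hΩposR]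
  have hGB : (Good.card : ℝ) + (Bad.card : ℝ) = (Ω.card : ℝ) := by exact_mod_cast hsplitcard
  linarith
end

section
/- For every d with 0 < d ≤ 2/3 there exist ε₀ > 0 and n₀ such that the following holds for all 0 < ε ≤ ε₀ and n ≥ n₀. If G = (A₁ ∪ A₂, E) is a bipartite graph with |A₁| = |A₂| = n such that the pair (A₁,A₂) is (d,ε)-super-regular in G, then there exists a spanning subgraph G' ⊆ G such that (A₁,A₂) is (d',ε^{1/3})-super-regular in G' for some d' with |d' − d| ≤ ε^{1/3}, and (A₁,A₂) is (d'',ε^{1/3})-super-regular in the bipartite complement K_{A₁,A₂} ∖ G' for some d'' with |d'' − (1 − d)| ≤ ε^{1/3}. -/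
open Finset

variable {V : Type*} [Fintype V] [DecidableEq V]

/-- The bipartite complement `K_{A,B} ∖ G'`: its edges are exactly the pairs in `A × B` which
are not edges of `G'`. -/
def bipComplement {V : Type*} [DecidableEq V] (A B : Finset V) (G' : SimpleGraph V) :
    SimpleGraph V :=
  SimpleGraph.fromRel (fun u w => (u ∈ A ∧ w ∈ B) ∧ ¬ G'.Adj u w)

set_option linter.unusedSectionVars false in
lemma sum_nbrCount_comm (G : SimpleGraph V) [DecidableRel G.Adj] (X Y : Finset V) :
    ∑ v ∈ X, nbrCount G v Y = ∑ w ∈ Y, nbrCount G w X := by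
  unfold nbrCount
  simp_rw [Finset.card_filter]
  rw [Finset.sum_comm]
  exact Finset.sum_congr rfl fun w _ => Finset.sum_congr rfl fun v _ =>
    if_congr (G.adj_comm v w) rfl rfl

lemma aux_abs_div {a c e b : ℝ} (hb : 0 < b) : |a / b - c| ≤ e ↔ |a - c * b| ≤ e * b := by
  rw [show a / b - c = (a - c * b) / b by field_simp, abs_div, abs_of_pos hb,
    div_le_iff₀ hb]

set_option maxHeartbeats 2000000 in
/-- Inner regularity: for `0 < d ≤ 2/3` there are `ε₀ > 0` and `n₀` so that every
`(d,ε)`-super-regular bipartite pair (`0 < ε ≤ ε₀`, parts of size `n ≥ n₀`) has a spanning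
subgraph `G'` which is `(d ± ε^{1/3}, ε^{1/3})`-super-regular and whose bipartite complement
is `(1 - d ± ε^{1/3}, ε^{1/3})`-super-regular. -/
theorem statement15 :
    ∀ d : ℝ, 0 < d → d ≤ 2 / 3 →
    ∃ ε₀ : ℝ, 0 < ε₀ ∧ ∃ n₀ : ℕ, ∀ ε : ℝ, 0 < ε → ε ≤ ε₀ → ∀ n : ℕ, n₀ ≤ n →
    ∀ (V : Type) (_ : Fintype V) (_ : DecidableEq V)
      (G : SimpleGraph V) (_ : DecidableRel G.Adj) (A B : Finset V),
    Disjoint A B → A ∪ B = Finset.univ → A.card = n → B.card = n →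
    (∀ u v, G.Adj u v → (u ∈ A ∧ v ∈ B) ∨ (u ∈ B ∧ v ∈ A)) →
    IsSuperRegular G A B d ε →
    ∃ (G' : SimpleGraph V) (_ : DecidableRel G'.Adj), G' ≤ G ∧
      (∃ d' : ℝ, |d' - d| ≤ ε ^ ((1 : ℝ) / 3) ∧
        IsSuperRegular G' A B d' (ε ^ ((1 : ℝ) / 3))) ∧
      (∃ d'' : ℝ, |d'' - (1 - d)| ≤ ε ^ ((1 : ℝ) / 3) ∧
        ∃ _ : DecidableRel (bipComplement A B G').Adj,
          IsSuperRegular (bipComplement A B G') A B d'' (ε ^ ((1 : ℝ) / 3))) := by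
  intro d hd0 hd23
  refine ⟨min (1/1000) (d/2), lt_min (by norm_num) (by positivity), 1, ?_⟩
  intro ε hε0 hεmin n hn1 V iV dV G iG A B hdisj huniv hcA hcB hbip hsr
  have hε1000 : ε ≤ 1/1000 := hεmin.trans (min_le_left _ _)
  have hεd : ε ≤ d/2 := hεmin.trans (min_le_right _ _)
  obtain ⟨η, hηdef⟩ : ∃ η : ℝ, η = ε ^ ((1:ℝ)/3) := ⟨_, rfl⟩
  rw [← hηdef]
  have hη0 : 0 < η := hηdef ▸ Real.rpow_pos_of_pos hε0 _
  have hη3 : η ^ 3 = ε := by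
    rw [hηdef, ← Real.rpow_natCast (ε ^ ((1:ℝ)/3)) 3, ← Real.rpow_mul hε0.le]
    norm_num
  have hη10 : η ≤ 1/10 := by nlinarith [sq_nonneg (η - 1/10), sq_nonneg (η + 1/10)]
  have hηsq : η * η ≤ (1/10) * η := by nlinarith
  have hηcub : η * η * η ≤ (1/10) * (η * η) := by nlinarith
  have hεη100 : ε ≤ (1/100) * η := by nlinarith
  have hεη : ε ≤ η := by nlinarith
  have hε3η : 3 * ε ≤ η := by nlinarith
  obtain ⟨⟨hdens, hreg⟩, hdegA, hdegB⟩ := hsr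
  have hn0 : 1 ≤ n := hn1
  have hnR : (1:ℝ) ≤ (n:ℝ) := by exact_mod_cast hn0
  have hnpos : (0:ℝ) < n := by linarith
  by_cases hsmall : ε * n ≤ 1
  · exfalso
    have hAne : A.Nonempty := Finset.card_pos.mp (hcA ▸ hn0)
    have hBne : B.Nonempty := Finset.card_pos.mp (hcB ▸ hn0)
    obtain ⟨u, hu⟩ := hAne
    obtain ⟨w, hw⟩ := hBne
    have hr := hreg {u} (Finset.singleton_subset_iff.mpr hu)
      {w} (Finset.singleton_subset_iff.mpr hw)
      (by rw [hcA, Finset.card_singleton]; exact_mod_cast hsmall)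
      (by rw [hcB, Finset.card_singleton]; exact_mod_cast hsmall)
    have hpd : pairDensity G {u} {w} = (nbrCount G u {w} : ℝ) := by
      simp [pairDensity]
    have hle1 : nbrCount G u {w} ≤ 1 := by
      have := Finset.card_filter_le {w} (fun x => G.Adj u x)
      simpa [nbrCount] using this
    rw [hpd, abs_le] at hr
    rcases Nat.le_one_iff_eq_zero_or_eq_one.mp hle1 with h | h <;> rw [h] at hr <;>
      [skip; skip] <;> push_cast at hr <;> [linarith; linarith]
  · push_neg at hsmall
    have hεn : (1:ℝ) < ε * n := hsmall
    have hηn : (1:ℝ) < η * n := by nlinarith [hεn, hεη, hnpos]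
    classical
    set HA : Finset V := A.filter (fun v => (d+ε) * n < (nbrCount G v B : ℝ)) with hHAdef
    set HB : Finset V := B.filter (fun v => (d+ε) * n < (nbrCount G v A : ℝ)) with hHBdef
    have hHAsub : HA ⊆ A := Finset.filter_subset _ _
    have hHBsub : HB ⊆ B := Finset.filter_subset _ _
    have hAB : ∀ v ∈ A, v ∉ B := fun v hv => Finset.disjoint_left.mp hdisj hv
    have hBA : ∀ v ∈ B, v ∉ A := fun v hv => Finset.disjoint_right.mp hdisj hv
    -- |HA| ≤ εn
    have hHAcard : (HA.card : ℝ) ≤ ε * n := by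
      by_contra hcon
      push_neg at hcon
      have hXc : ε * (A.card : ℝ) ≤ HA.card := by rw [hcA]; exact hcon.le
      have hYc : ε * (B.card : ℝ) ≤ B.card := by
        rw [hcB]; nlinarith
      have hr := hreg HA hHAsub B le_rfl hXc hYc
      have hHApos : (0:ℝ) < HA.card := by linarith
      have hne : HA.Nonempty := Finset.card_pos.mp (Nat.cast_pos.mp hHApos)
      have hsum : (HA.card : ℝ) * ((d+ε) * n) < ∑ v ∈ HA, (nbrCount G v B : ℝ) := by
        have := Finset.sum_lt_sum_of_nonempty hne
          (f := fun _ => (d+ε) * n) (g := fun v => (nbrCount G v B : ℝ))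
          (fun v hv => (Finset.mem_filter.mp hv).2)
        simpa [Finset.sum_const, nsmul_eq_mul, mul_comm] using this
      have hBn : ((B.card : ℕ) : ℝ) = (n : ℝ) := by rw [hcB]
      have hpd : (d + ε) < pairDensity G HA B := by
        have hden : (0:ℝ) < (HA.card:ℝ) * (B.card:ℝ) :=
          mul_pos hHApos (by rw [hBn]; exact hnpos)
        rw [pairDensity, lt_div_iff₀ hden, hBn]
        linarith [hsum]
      rw [abs_le] at hr
      linarith [hr.2]
    have hHBcard : (HB.card : ℝ) ≤ ε * n := by
      by_contra hcon
      push_neg at hcon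
      have hXc : ε * (A.card : ℝ) ≤ A.card := by rw [hcA]; nlinarith
      have hYc : ε * (B.card : ℝ) ≤ HB.card := by rw [hcB]; exact hcon.le
      have hr := hreg A le_rfl HB hHBsub hXc hYc
      have hHBpos : (0:ℝ) < HB.card := by linarith
      have hne : HB.Nonempty := Finset.card_pos.mp (Nat.cast_pos.mp hHBpos)
      have hswap : ∑ v ∈ A, (nbrCount G v HB : ℝ) = ∑ w ∈ HB, (nbrCount G w A : ℝ) := by
        exact_mod_cast congrArg (Nat.cast : ℕ → ℝ) (sum_nbrCount_comm G A HB)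
      have hsum : (HB.card : ℝ) * ((d+ε) * n) < ∑ v ∈ A, (nbrCount G v HB : ℝ) := by
        rw [hswap]
        have := Finset.sum_lt_sum_of_nonempty hne
          (f := fun _ => (d+ε) * n) (g := fun w => (nbrCount G w A : ℝ))
          (fun w hw => (Finset.mem_filter.mp hw).2)
        simpa [Finset.sum_const, nsmul_eq_mul, mul_comm] using this
      have hAn : ((A.card : ℕ) : ℝ) = (n : ℝ) := by rw [hcA]
      have hpd : (d + ε) < pairDensity G A HB := by
        have hden : (0:ℝ) < (A.card:ℝ) * (HB.card:ℝ) :=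
          mul_pos (by rw [hAn]; exact hnpos) hHBpos
        rw [pairDensity, lt_div_iff₀ hden, hAn]
        linarith [hsum]
      rw [abs_le] at hr
      linarith [hr.2]
    -- the trimming target
    set t : ℕ := ⌊(d+ε) * n⌋₊ with htdef
    have htle : (t:ℝ) ≤ (d+ε) * n := Nat.floor_le (by positivity)
    have htge : (d+ε) * n - 1 ≤ (t:ℝ) := by
      have := Nat.lt_floor_add_one ((d+ε) * n); linarith
    have hfeasA : ∀ v ∈ HA, t ≤ nbrCount G v B := by
      intro v hv
      have h2 := (Finset.mem_filter.mp hv).2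
      exact_mod_cast le_of_lt (lt_of_le_of_lt htle h2)
    have hfeasB : ∀ v ∈ HB, t ≤ nbrCount G v A := by
      intro v hv
      have h2 := (Finset.mem_filter.mp hv).2
      exact_mod_cast le_of_lt (lt_of_le_of_lt htle h2)
    -- choose trimmed neighbourhoods
    have hchA : ∀ v : V, ∃ s : Finset V, s ⊆ B.filter (fun w => G.Adj v w) ∧
        (v ∈ HA → s.card = t) ∧ (v ∉ HA → s = B.filter (fun w => G.Adj v w)) := by
      intro v
      by_cases hv : v ∈ HA
      · obtain ⟨s, hs1, hs2⟩ := Finset.exists_subset_card_eq (hfeasA v hv)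
        exact ⟨s, hs1, fun _ => hs2, fun h => absurd hv h⟩
      · exact ⟨_, Finset.Subset.refl _, fun h => absurd h hv, fun _ => rfl⟩
    have hchB : ∀ v : V, ∃ s : Finset V, s ⊆ A.filter (fun w => G.Adj v w) ∧
        (v ∈ HB → s.card = t) ∧ (v ∉ HB → s = A.filter (fun w => G.Adj v w)) := by
      intro v
      by_cases hv : v ∈ HB
      · obtain ⟨s, hs1, hs2⟩ := Finset.exists_subset_card_eq (hfeasB v hv)
        exact ⟨s, hs1, fun _ => hs2, fun h => absurd hv h⟩
      · exact ⟨_, Finset.Subset.refl _, fun h => absurd h hv, fun _ => rfl⟩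
    choose S hSsub hScard hSnot using hchA
    choose T hTsub hTcard hTnot using hchB
    -- the subgraph G'
    set G' : SimpleGraph V :=
      { Adj := fun u w => G.Adj u w ∧ (u ∈ HA → w ∈ S u) ∧ (w ∈ HA → u ∈ S w) ∧
          (u ∈ HB → w ∈ T u) ∧ (w ∈ HB → u ∈ T w),
        symm := ⟨fun u w h => ⟨h.1.symm, h.2.2.1, h.2.1, h.2.2.2.2, h.2.2.2.1⟩⟩,
        loopless := ⟨fun v h => G.loopless.irrefl v h.1⟩ } with hG'def
    letI instG' : DecidableRel G'.Adj := fun u w => Classical.dec _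
    have hG'adj : ∀ u w, G'.Adj u w ↔ (G.Adj u w ∧ (u ∈ HA → w ∈ S u) ∧ (w ∈ HA → u ∈ S w) ∧
        (u ∈ HB → w ∈ T u) ∧ (w ∈ HB → u ∈ T w)) := fun u w => Iff.rfl
    have hG'le : G' ≤ G := fun u w h => h.1
    -- neighbourhood filter facts, A side
    have hfilsubA : ∀ v ∈ A, ∀ Y ⊆ B, Y.filter (fun w => G'.Adj v w) ⊆ S v := by
      intro v hv Y hY w hw
      obtain ⟨hwY, hadj⟩ := Finset.mem_filter.mp hw
      by_cases hvHA : v ∈ HA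
      · exact hadj.2.1 hvHA
      · rw [hSnot v hvHA]
        exact Finset.mem_filter.mpr ⟨hY hwY, hadj.1⟩
    have hfilsupA : ∀ v ∈ A, S v \ HB ⊆ B.filter (fun w => G'.Adj v w) := by
      intro v hv w hw
      obtain ⟨hwS, hwHB⟩ := Finset.mem_sdiff.mp hw
      have hwNB := hSsub v hwS
      have hwB : w ∈ B := (Finset.mem_filter.mp hwNB).1
      have hadjG : G.Adj v w := (Finset.mem_filter.mp hwNB).2
      exact Finset.mem_filter.mpr ⟨hwB, hadjG, fun _ => hwS,
        fun h => absurd (hHAsub h) (hBA w hwB),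
        fun h => absurd (hHBsub h) (hAB v hv), fun h => absurd h hwHB⟩
    have hfilsubB : ∀ v ∈ B, ∀ Y ⊆ A, Y.filter (fun w => G'.Adj v w) ⊆ T v := by
      intro v hv Y hY w hw
      obtain ⟨hwY, hadj⟩ := Finset.mem_filter.mp hw
      by_cases hvHB : v ∈ HB
      · exact hadj.2.2.2.1 hvHB
      · rw [hTnot v hvHB]
        exact Finset.mem_filter.mpr ⟨hY hwY, hadj.1⟩
    have hfilsupB : ∀ v ∈ B, T v \ HA ⊆ A.filter (fun w => G'.Adj v w) := by
      intro v hv w hw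
      obtain ⟨hwS, hwHA⟩ := Finset.mem_sdiff.mp hw
      have hwNA := hTsub v hwS
      have hwA : w ∈ A := (Finset.mem_filter.mp hwNA).1
      have hadjG : G.Adj v w := (Finset.mem_filter.mp hwNA).2
      exact Finset.mem_filter.mpr ⟨hwA, hadjG, fun h => absurd (hHAsub h) (hBA v hv),
        fun h => absurd h hwHA, fun _ => hwS, fun h => absurd (hHBsub h) (hAB w hwA)⟩
    -- trimmed sizes
    have hScardub : ∀ v ∈ A, ((S v).card : ℝ) ≤ (d+ε) * n := by
      intro v hv
      by_cases hvHA : v ∈ HA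
      · rw [hScard v hvHA]; exact htle
      · rw [hSnot v hvHA]
        have hnm : ¬ ((d+ε) * n < (nbrCount G v B : ℝ)) := fun hlt =>
          hvHA (Finset.mem_filter.mpr ⟨hv, hlt⟩)
        push_neg at hnm
        exact hnm
    have hScardlb : ∀ v ∈ A, (d - ε) * n - 1 ≤ ((S v).card : ℝ) := by
      intro v hv
      by_cases hvHA : v ∈ HA
      · rw [hScard v hvHA]
        nlinarith [htge, hε0, hnpos]
      · rw [hSnot v hvHA]
        have h1 := hdegA v hv
        rw [hcB] at h1
        have : (nbrCount G v B : ℝ) = ((B.filter (fun w => G.Adj v w)).card : ℝ) := rfl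
        linarith [h1, this]
    have hTcardub : ∀ v ∈ B, ((T v).card : ℝ) ≤ (d+ε) * n := by
      intro v hv
      by_cases hvHB : v ∈ HB
      · rw [hTcard v hvHB]; exact htle
      · rw [hTnot v hvHB]
        have hnm : ¬ ((d+ε) * n < (nbrCount G v A : ℝ)) := fun hlt =>
          hvHB (Finset.mem_filter.mpr ⟨hv, hlt⟩)
        push_neg at hnm
        exact hnm
    have hTcardlb : ∀ v ∈ B, (d - ε) * n - 1 ≤ ((T v).card : ℝ) := by
      intro v hv
      by_cases hvHB : v ∈ HB
      · rw [hTcard v hvHB]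
        nlinarith [htge, hε0, hnpos]
      · rw [hTnot v hvHB]
        have h1 := hdegB v hv
        rw [hcA] at h1
        have : (nbrCount G v A : ℝ) = ((A.filter (fun w => G.Adj v w)).card : ℝ) := rfl
        linarith [h1, this]
    -- degree bounds in G'
    have hdeg'ubA : ∀ v ∈ A, (nbrCount G' v B : ℝ) ≤ (d+ε) * n := by
      intro v hv
      have h1 : nbrCount G' v B ≤ (S v).card :=
        Finset.card_le_card (hfilsubA v hv B (Finset.Subset.refl B))
      calc (nbrCount G' v B : ℝ) ≤ ((S v).card : ℝ) := by exact_mod_cast h1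
        _ ≤ (d+ε) * n := hScardub v hv
    have hdeg'lbA : ∀ v ∈ A, (d - 3*ε) * n ≤ (nbrCount G' v B : ℝ) := by
      intro v hv
      have h1 : (S v).card ≤ (S v \ HB).card + HB.card :=
        Finset.card_le_card_sdiff_add_card
      have h2 : (S v \ HB).card ≤ nbrCount G' v B :=
        Finset.card_le_card (hfilsupA v hv)
      have h1R : ((S v).card : ℝ) ≤ ((S v \ HB).card : ℝ) + HB.card := by exact_mod_cast h1
      have h2R : ((S v \ HB).card : ℝ) ≤ (nbrCount G' v B : ℝ) := by exact_mod_cast h2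
      have h3 := hScardlb v hv
      nlinarith [hHBcard, hεn, hε0, hnpos]
    have hdeg'ubB : ∀ v ∈ B, (nbrCount G' v A : ℝ) ≤ (d+ε) * n := by
      intro v hv
      have h1 : nbrCount G' v A ≤ (T v).card :=
        Finset.card_le_card (hfilsubB v hv A (Finset.Subset.refl A))
      calc (nbrCount G' v A : ℝ) ≤ ((T v).card : ℝ) := by exact_mod_cast h1
        _ ≤ (d+ε) * n := hTcardub v hv
    have hdeg'lbB : ∀ v ∈ B, (d - 3*ε) * n ≤ (nbrCount G' v A : ℝ) := by
      intro v hv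
      have h1 : (T v).card ≤ (T v \ HA).card + HA.card :=
        Finset.card_le_card_sdiff_add_card
      have h2 : (T v \ HA).card ≤ nbrCount G' v A :=
        Finset.card_le_card (hfilsupB v hv)
      have h1R : ((T v).card : ℝ) ≤ ((T v \ HA).card : ℝ) + HA.card := by exact_mod_cast h1
      have h2R : ((T v \ HA).card : ℝ) ≤ (nbrCount G' v A : ℝ) := by exact_mod_cast h2
      have h3 := hTcardlb v hv
      nlinarith [hHAcard, hεn, hε0, hnpos]
    -- edge count comparison
    have edgeUB : ∀ (X Y : Finset V),
        (∑ v ∈ X, (nbrCount G' v Y : ℝ)) ≤ ∑ v ∈ X, (nbrCount G v Y : ℝ) := by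
      intro X Y
      refine Finset.sum_le_sum fun v _ => ?_
      have hsub : Y.filter (fun w => G'.Adj v w) ⊆ Y.filter (fun w => G.Adj v w) := by
        intro w hw
        obtain ⟨h1, h2⟩ := Finset.mem_filter.mp hw
        exact Finset.mem_filter.mpr ⟨h1, h2.1⟩
      exact_mod_cast Finset.card_le_card hsub
    have edgeLB : ∀ X ⊆ A, ∀ Y ⊆ B,
        (∑ v ∈ X, (nbrCount G v Y : ℝ)) - (∑ v ∈ X, (nbrCount G' v Y : ℝ))
          ≤ ε * n * Y.card + ε * n * X.card := by
      intro X hX Y hY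
      have hper : ∀ v ∈ X, (nbrCount G v Y : ℝ) - (nbrCount G' v Y : ℝ) ≤
          (if v ∈ HA then (Y.card : ℝ) else 0) + HB.card := by
        intro v hv
        by_cases hvHA : v ∈ HA
        · rw [if_pos hvHA]
          have h1 : (nbrCount G v Y : ℝ) ≤ Y.card := by
            exact_mod_cast Finset.card_filter_le Y _
          have h2 : (0:ℝ) ≤ (nbrCount G' v Y : ℝ) := Nat.cast_nonneg _
          have h3 : (0:ℝ) ≤ (HB.card : ℝ) := Nat.cast_nonneg _
          linarith
        · rw [if_neg hvHA]
          have hrem : Y.filter (fun w => G.Adj v w) \ Y.filter (fun w => G'.Adj v w) ⊆ HB := by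
            intro w hw
            obtain ⟨hw1, hw2⟩ := Finset.mem_sdiff.mp hw
            obtain ⟨hwY, hadj⟩ := Finset.mem_filter.mp hw1
            by_contra hwHB
            exact hw2 (Finset.mem_filter.mpr ⟨hwY, hadj, fun h => absurd h hvHA,
              fun h => absurd (hHAsub h) (hBA w (hY hwY)),
              fun h => absurd (hHBsub h) (hAB v (hX hv)), fun h => absurd h hwHB⟩)
          have h1 : nbrCount G v Y ≤ nbrCount G' v Y + HB.card := by
            calc nbrCount G v Y
                ≤ (Y.filter (fun w => G.Adj v w) \ Y.filter (fun w => G'.Adj v w)).card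
                  + (Y.filter (fun w => G'.Adj v w)).card :=
                  Finset.card_le_card_sdiff_add_card
              _ ≤ HB.card + nbrCount G' v Y :=
                  Nat.add_le_add (Finset.card_le_card hrem) (Nat.le_refl _)
              _ = nbrCount G' v Y + HB.card := Nat.add_comm _ _
          have h1R : (nbrCount G v Y : ℝ) ≤ (nbrCount G' v Y : ℝ) + HB.card := by
            exact_mod_cast h1
          linarith
      have hsum := Finset.sum_le_sum hper
      rw [Finset.sum_sub_distrib] at hsum
      have hsplit : (∑ v ∈ X, ((if v ∈ HA then (Y.card:ℝ) else 0) + HB.card))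
          = (∑ v ∈ X, if v ∈ HA then (Y.card:ℝ) else 0) + X.card * HB.card := by
        rw [Finset.sum_add_distrib, Finset.sum_const, nsmul_eq_mul]
      have hind : (∑ v ∈ X, if v ∈ HA then (Y.card:ℝ) else 0)
          ≤ (HA.card : ℝ) * Y.card := by
        rw [← Finset.sum_filter, Finset.sum_const, nsmul_eq_mul]
        have hsb : (X.filter (fun v => v ∈ HA)).card ≤ HA.card :=
          Finset.card_le_card (fun w hw => (Finset.mem_filter.mp hw).2)
        have hsbR : ((X.filter (fun v => v ∈ HA)).card : ℝ) ≤ HA.card := by exact_mod_cast hsb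
        exact mul_le_mul_of_nonneg_right hsbR (Nat.cast_nonneg _)
      have hb1 : (HA.card : ℝ) * Y.card ≤ ε * n * Y.card :=
        mul_le_mul_of_nonneg_right hHAcard (Nat.cast_nonneg _)
      have hb2 : (X.card : ℝ) * HB.card ≤ ε * n * X.card := by
        calc (X.card : ℝ) * HB.card ≤ (X.card : ℝ) * (ε * n) :=
            mul_le_mul_of_nonneg_left hHBcard (Nat.cast_nonneg _)
          _ = ε * n * X.card := by ring
      linarith [hsum, hsplit.le, hsplit.ge, hind]
    -- totals and the density of G'
    have hAn : ((A.card : ℕ) : ℝ) = (n:ℝ) := by rw [hcA]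
    have hBn : ((B.card : ℕ) : ℝ) = (n:ℝ) := by rw [hcB]
    have hE : (∑ v ∈ A, (nbrCount G v B : ℝ)) = d * ((n:ℝ) * n) := by
      have hE0 := hdens
      rw [pairDensity, hAn, hBn, div_eq_iff (mul_pos hnpos hnpos).ne'] at hE0
      exact hE0
    obtain ⟨d', hd'def⟩ : ∃ d' : ℝ,
        d' = (∑ v ∈ A, (nbrCount G' v B : ℝ)) / ((n:ℝ) * n) := ⟨_, rfl⟩
    have hE' : (∑ v ∈ A, (nbrCount G' v B : ℝ)) = d' * ((n:ℝ) * n) := by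
      rw [hd'def, div_mul_cancel₀]
      exact (mul_pos hnpos hnpos).ne'
    have hd'ub : d' ≤ d := by
      rw [hd'def, div_le_iff₀ (mul_pos hnpos hnpos)]
      linarith [edgeUB A B, hE]
    have hd'lb : d - 2*ε ≤ d' := by
      have h1 := edgeLB A (Finset.Subset.refl A) B (Finset.Subset.refl B)
      rw [hAn, hBn] at h1
      rw [hd'def, le_div_iff₀ (mul_pos hnpos hnpos)]
      linarith only [hE, h1]
    have hεnηn : ε * n ≤ η * n := mul_le_mul_of_nonneg_right hεη (Nat.cast_nonneg n)
    -- master estimate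
    have hmain : ∀ X ⊆ A, ∀ Y ⊆ B, η * n ≤ (X.card : ℝ) → η * n ≤ (Y.card : ℝ) →
        |(∑ v ∈ X, (nbrCount G' v Y : ℝ)) - d' * ((X.card:ℝ) * Y.card)|
          ≤ η * ((X.card:ℝ) * Y.card) := by
      intro X hX Y hY hx hy
      have hx0 : (0:ℝ) < X.card := lt_of_lt_of_le (by linarith only [hηn]) hx
      have hy0 : (0:ℝ) < Y.card := lt_of_lt_of_le (by linarith only [hηn]) hy
      have hxy : (0:ℝ) < (X.card:ℝ) * Y.card := mul_pos hx0 hy0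
      have hr := hreg X hX Y hY (by rw [hcA]; linarith only [hεnηn, hx])
        (by rw [hcB]; linarith only [hεnηn, hy])
      rw [pairDensity, aux_abs_div hxy] at hr
      have hub := edgeUB X Y
      have hlb := edgeLB X hX Y hY
      have e1 : ε * n * (Y.card:ℝ) ≤ (η*η) * ((X.card:ℝ) * Y.card) := by
        have h0 : η * n * (Y.card:ℝ) ≤ (X.card:ℝ) * Y.card :=
          mul_le_mul_of_nonneg_right hx hy0.le
        calc ε * n * (Y.card:ℝ) = η * (η * (η * n * (Y.card:ℝ))) := by rw [← hη3]; ring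
          _ ≤ η * (η * ((X.card:ℝ) * Y.card)) :=
            mul_le_mul_of_nonneg_left (mul_le_mul_of_nonneg_left h0 hη0.le) hη0.le
          _ = (η*η) * ((X.card:ℝ) * Y.card) := by ring
      have e2 : ε * n * (X.card:ℝ) ≤ (η*η) * ((X.card:ℝ) * Y.card) := by
        have h0 : η * n * (X.card:ℝ) ≤ (Y.card:ℝ) * X.card :=
          mul_le_mul_of_nonneg_right hy hx0.le
        calc ε * n * (X.card:ℝ) = η * (η * (η * n * (X.card:ℝ))) := by rw [← hη3]; ring
          _ ≤ η * (η * ((Y.card:ℝ) * X.card)) :=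
            mul_le_mul_of_nonneg_left (mul_le_mul_of_nonneg_left h0 hη0.le) hη0.le
          _ = (η*η) * ((X.card:ℝ) * Y.card) := by ring
      have h1 : |(∑ v ∈ X, (nbrCount G' v Y : ℝ)) - (∑ v ∈ X, (nbrCount G v Y : ℝ))|
          ≤ 2*(η*η) * ((X.card:ℝ) * Y.card) := by
        rw [abs_sub_comm, abs_of_nonneg (by linarith only [hub])]
        linarith only [hlb, e1, e2]
      have h3 : |d * ((X.card:ℝ)*Y.card) - d' * ((X.card:ℝ)*Y.card)|
          ≤ 2*ε * ((X.card:ℝ)*Y.card) := by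
        have heq : d * ((X.card:ℝ)*Y.card) - d' * ((X.card:ℝ)*Y.card)
            = (d - d') * ((X.card:ℝ)*Y.card) := by ring
        rw [heq, abs_of_nonneg (mul_nonneg (sub_nonneg.mpr hd'ub) hxy.le)]
        exact mul_le_mul_of_nonneg_right (by linarith only [hd'lb]) hxy.le
      have t1 := abs_sub_le (∑ v ∈ X, (nbrCount G' v Y : ℝ))
        (∑ v ∈ X, (nbrCount G v Y : ℝ)) (d * ((X.card:ℝ)*Y.card))
      have t2 := abs_sub_le (∑ v ∈ X, (nbrCount G' v Y : ℝ))
        (d * ((X.card:ℝ)*Y.card)) (d' * ((X.card:ℝ)*Y.card))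
      have hcoef : 2*(η*η) + 3*ε ≤ η := by linarith only [hηsq, hεη100, hη0]
      linarith only [mul_le_mul_of_nonneg_right hcoef hxy.le, hr, h1, h3, t1, t2]
    -- complement adjacency
    letI instC : DecidableRel (bipComplement A B G').Adj := fun u w => Classical.dec _
    have hCadjA : ∀ v ∈ A, ∀ w ∈ B, ((bipComplement A B G').Adj v w ↔ ¬ G'.Adj v w) := by
      intro v hv w hw
      rw [bipComplement, SimpleGraph.fromRel_adj]
      constructor
      · rintro ⟨hne, h | h⟩
        · exact h.2
        · exact absurd h.1.2 (hAB v hv)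
      · intro h
        exact ⟨fun he => hAB v hv (he ▸ hw), Or.inl ⟨⟨hv, hw⟩, h⟩⟩
    have hCadjB : ∀ v ∈ B, ∀ w ∈ A, ((bipComplement A B G').Adj v w ↔ ¬ G'.Adj v w) := by
      intro v hv w hw
      rw [bipComplement, SimpleGraph.fromRel_adj]
      constructor
      · rintro ⟨hne, h | h⟩
        · exact absurd h.1.1 (hBA v hv)
        · exact fun hadj => h.2 hadj.symm
      · intro h
        exact ⟨fun he => hBA v hv (he ▸ hw), Or.inr ⟨⟨hw, hv⟩, fun hadj => h hadj.symm⟩⟩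
    have hCcntA : ∀ v ∈ A, ∀ Y ⊆ B, (nbrCount (bipComplement A B G') v Y : ℝ)
        = (Y.card : ℝ) - nbrCount G' v Y := by
      intro v hv Y hY
      have hfil : Y.filter (fun w => (bipComplement A B G').Adj v w)
          = Y \ Y.filter (fun w => G'.Adj v w) := by
        ext w
        constructor
        · intro hw'
          obtain ⟨hwY, hadj⟩ := Finset.mem_filter.mp hw'
          have hno := (hCadjA v hv w (hY hwY)).mp hadj
          exact Finset.mem_sdiff.mpr ⟨hwY, fun hmem => hno (Finset.mem_filter.mp hmem).2⟩
        · intro hw'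
          obtain ⟨hwY, hnm⟩ := Finset.mem_sdiff.mp hw'
          exact Finset.mem_filter.mpr ⟨hwY, (hCadjA v hv w (hY hwY)).mpr
            (fun hadj => hnm (Finset.mem_filter.mpr ⟨hwY, hadj⟩))⟩
      have hcle : (Y.filter (fun w => G'.Adj v w)).card ≤ Y.card := Finset.card_filter_le _ _
      have h1 : nbrCount (bipComplement A B G') v Y
          = Y.card - (Y.filter (fun w => G'.Adj v w)).card := by
        show (Y.filter (fun w => (bipComplement A B G').Adj v w)).card = _
        rw [hfil, Finset.card_sdiff_of_subset (Finset.filter_subset _ _)]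
      rw [h1, Nat.cast_sub hcle]
      rfl
    have hCcntB : ∀ v ∈ B, ∀ Y ⊆ A, (nbrCount (bipComplement A B G') v Y : ℝ)
        = (Y.card : ℝ) - nbrCount G' v Y := by
      intro v hv Y hY
      have hfil : Y.filter (fun w => (bipComplement A B G').Adj v w)
          = Y \ Y.filter (fun w => G'.Adj v w) := by
        ext w
        constructor
        · intro hw'
          obtain ⟨hwY, hadj⟩ := Finset.mem_filter.mp hw'
          have hno := (hCadjB v hv w (hY hwY)).mp hadj
          exact Finset.mem_sdiff.mpr ⟨hwY, fun hmem => hno (Finset.mem_filter.mp hmem).2⟩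
        · intro hw'
          obtain ⟨hwY, hnm⟩ := Finset.mem_sdiff.mp hw'
          exact Finset.mem_filter.mpr ⟨hwY, (hCadjB v hv w (hY hwY)).mpr
            (fun hadj => hnm (Finset.mem_filter.mpr ⟨hwY, hadj⟩))⟩
      have hcle : (Y.filter (fun w => G'.Adj v w)).card ≤ Y.card := Finset.card_filter_le _ _
      have h1 : nbrCount (bipComplement A B G') v Y
          = Y.card - (Y.filter (fun w => G'.Adj v w)).card := by
        show (Y.filter (fun w => (bipComplement A B G').Adj v w)).card = _
        rw [hfil, Finset.card_sdiff_of_subset (Finset.filter_subset _ _)]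
      rw [h1, Nat.cast_sub hcle]
      rfl
    -- assemble
    refine ⟨G', instG', hG'le, ⟨d', ?_, ⟨?_, ?_⟩, ?_, ?_⟩,
      ⟨1 - d', ?_, instC, ⟨?_, ?_⟩, ?_, ?_⟩⟩
    · rw [abs_le]
      constructor <;> linarith [hd'lb, hd'ub, hε3η, hε0]
    · rw [pairDensity, hAn, hBn]
      exact hd'def.symm
    · intro X hX Y hY hx hy
      rw [hcA] at hx
      rw [hcB] at hy
      have hx0 : (0:ℝ) < X.card := lt_of_lt_of_le (by linarith only [hηn]) hx
      have hy0 : (0:ℝ) < Y.card := lt_of_lt_of_le (by linarith only [hηn]) hy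
      rw [pairDensity, aux_abs_div (mul_pos hx0 hy0)]
      exact hmain X hX Y hY hx hy
    · intro v hv
      rw [hcB]
      have h2 : (d' - η) * (n:ℝ) ≤ (d - 3*ε) * n :=
        mul_le_mul_of_nonneg_right (by linarith [hd'ub, hε3η]) hnpos.le
      linarith [hdeg'lbA v hv]
    · intro v hv
      rw [hcA]
      have h2 : (d' - η) * (n:ℝ) ≤ (d - 3*ε) * n :=
        mul_le_mul_of_nonneg_right (by linarith [hd'ub, hε3η]) hnpos.le
      linarith [hdeg'lbB v hv]
    · have : (1 - d') - (1 - d) = d - d' := by ring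
      rw [this, abs_le]
      constructor <;> linarith [hd'lb, hd'ub, hε3η, hε0]
    · -- density of the complement
      have hsumC : (∑ v ∈ A, (nbrCount (bipComplement A B G') v B : ℝ))
          = (n:ℝ) * n - d' * ((n:ℝ) * n) := by
        rw [Finset.sum_congr rfl (fun v hv => by
          rw [hCcntA v hv B (Finset.Subset.refl B), hBn]),
          Finset.sum_sub_distrib, Finset.sum_const, nsmul_eq_mul, hAn, hE']
      rw [pairDensity, hAn, hBn, hsumC]
      field_simp
    · intro X hX Y hY hx hy
      rw [hcA] at hx
      rw [hcB] at hy
      have hx0 : (0:ℝ) < X.card := lt_of_lt_of_le (by linarith only [hηn]) hx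
      have hy0 : (0:ℝ) < Y.card := lt_of_lt_of_le (by linarith only [hηn]) hy
      have hsumC : (∑ v ∈ X, (nbrCount (bipComplement A B G') v Y : ℝ))
          = (X.card : ℝ) * Y.card - (∑ v ∈ X, (nbrCount G' v Y : ℝ)) := by
        rw [Finset.sum_congr rfl (fun v hv => hCcntA v (hX hv) Y hY),
          Finset.sum_sub_distrib, Finset.sum_const, nsmul_eq_mul]
      rw [pairDensity, aux_abs_div (mul_pos hx0 hy0), hsumC]
      have heq : (X.card : ℝ) * Y.card - (∑ v ∈ X, (nbrCount G' v Y : ℝ))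
          - (1 - d') * ((X.card:ℝ) * Y.card)
          = -((∑ v ∈ X, (nbrCount G' v Y : ℝ)) - d' * ((X.card:ℝ) * Y.card)) := by ring
      rw [heq, abs_neg]
      exact hmain X hX Y hY hx hy
    · intro v hv
      rw [hcB, hCcntA v hv B (Finset.Subset.refl B), hBn]
      have h2 : (1 - d' - η) * (n:ℝ) ≤ (1 - d - ε) * n :=
        mul_le_mul_of_nonneg_right (by linarith [hd'lb, hε3η]) hnpos.le
      linarith [hdeg'ubA v hv]
    · intro v hv
      rw [hcA, hCcntB v hv A (Finset.Subset.refl A), hAn]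
      have h2 : (1 - d' - η) * (n:ℝ) ≤ (1 - d - ε) * n :=
        mul_le_mul_of_nonneg_right (by linarith [hd'lb, hε3η]) hnpos.le
      linarith [hdeg'ubB v hv]
end
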